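/- arXiv:1109.6042 — 13 statements merged into one kernel-verified Lean document; each statement's English description precedes it below -/
import Mathlib

section
/- Suppose the matrix P = diag(κ₁, …, κ_p) − Λ is positive definite. Then θ = μ is a local maximum of f, and every local maximum θ of f satisfies θ_i ≡ μ_i (mod 2π) for all i; in particular, the global maximum of the multivariate von Mises density is attained at θ = μ and the density has no other local maxima. -/
/-!
Write `sᵢ = sin (θᵢ - μᵢ)`, `cᵢ = cos (θᵢ - μᵢ)` and `P = diag κ - Λ`, so that
`f = ∑ κᵢ cᵢ + ½ sᵀ Λ s`. Since `sᵀ Λ s ≤ ∑ κᵢ sᵢ²` and `c + s²/2 = 1 - (1 - c)²/2 ≤ 1`, we get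
`f ≤ ∑ κᵢ = f(μ)`.

Because `λᵢᵢ = 0`, in the single coordinate `θᵢ` the function `f` is a sinusoid
`κᵢ cos (θᵢ - μᵢ) + (Λ s)ᵢ sin (θᵢ - μᵢ)` plus a constant, with `κᵢ = Pᵢᵢ > 0`. At a local maximum
such a sinusoid is stationary, `κᵢ sᵢ = (Λ s)ᵢ cᵢ`, and sits on the upper half of its wave,
`cᵢ > 0`. Hence `sᵢ (Λ s)ᵢ = κᵢ sᵢ² / cᵢ ≥ κᵢ sᵢ²`, i.e. `sᵀ P s ≤ 0`, so `s = 0`; with `cᵢ > 0`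
this forces `cᵢ = 1`.
-/

open Real Matrix Filter Topology

theorem Matrix.sum_sum_mul_mul_eq_dotProduct_mulVec {ι R : Type*} [Fintype ι] [CommSemiring R]
    (A : Matrix ι ι R) (v w : ι → R) :
    ∑ i, ∑ j, v i * A i j * w j = v ⬝ᵥ A *ᵥ w := by
  simp only [dotProduct, mulVec, Finset.mul_sum, mul_assoc]

theorem Matrix.dotProduct_diagonal_sub_mulVec {ι R : Type*} [Fintype ι] [DecidableEq ι]
    [CommRing R] (κ : ι → R) (A : Matrix ι ι R) (v : ι → R) :
    v ⬝ᵥ (diagonal κ - A) *ᵥ v = ∑ i, κ i * v i ^ 2 - v ⬝ᵥ A *ᵥ v := by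
  rw [sub_mulVec, dotProduct_sub]
  congr 1
  simp only [dotProduct, mulVec_diagonal]
  exact Finset.sum_congr rfl fun i _ => by ring

theorem Matrix.IsSymm.dotProduct_mulVec_add_single {ι R : Type*} [Fintype ι] [DecidableEq ι]
    [CommRing R] {A : Matrix ι ι R} (hA : A.IsSymm) (v : ι → R) (i : ι) (d : R) :
    (v + Pi.single i d) ⬝ᵥ A *ᵥ (v + Pi.single i d)
      = v ⬝ᵥ A *ᵥ v + 2 * d * (A *ᵥ v) i + d ^ 2 * A i i := by
  have hsymm : v ⬝ᵥ A *ᵥ Pi.single i d = d * (A *ᵥ v) i := by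
    rw [dotProduct_mulVec, ← mulVec_transpose, hA.eq, dotProduct_single, mul_comm]
  rw [mulVec_add, dotProduct_add, add_dotProduct, add_dotProduct, hsymm]
  simp only [single_dotProduct, mulVec_single, Pi.smul_apply, op_smul_eq_mul, col_apply]
  ring

theorem Matrix.PosDef.isSymm_of_diagonal_sub {ι : Type*} [Fintype ι] [DecidableEq ι]
    {κ : ι → ℝ} {Λ : Matrix ι ι ℝ} (hP : (diagonal κ - Λ).PosDef) : Λ.IsSymm := by
  simpa using (isSymm_diagonal κ).sub (isHermitian_iff_isSymm.mp hP.isHermitian)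

theorem Matrix.PosDef.pos_of_diagonal_sub {ι : Type*} [Fintype ι] [DecidableEq ι]
    {κ : ι → ℝ} {Λ : Matrix ι ι ℝ} (hP : (diagonal κ - Λ).PosDef) (hΛ : ∀ i, Λ i i = 0) (i : ι) :
    0 < κ i := by
  simpa [hΛ] using hP.diag_pos (i := i)

theorem Function.apply_update_eq_add_single {ι G : Type*} [DecidableEq ι] [AddCommGroup G]
    {α : ι → Type*} (g : ∀ i, α i → G) (x : ∀ i, α i) (i : ι) (t : α i) :
    (fun j => g j (update x i t j)) = (fun j => g j (x j)) + Pi.single i (g i t - g i (x i)) := by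
  ext j
  rcases eq_or_ne j i with rfl | hj
  · simp
  · simp [hj]

theorem IsLocalMax.update {ι Y : Type*} [DecidableEq ι] {X : ι → Type*}
    [∀ i, TopologicalSpace (X i)] [Preorder Y] {f : (∀ i, X i) → Y} {x : ∀ i, X i}
    (h : IsLocalMax f x) (i : ι) : IsLocalMax (fun t => f (Function.update x i t)) (x i) := by
  rw [← Function.update_eq_self i x] at h
  exact h.comp_continuous (continuous_const.update i continuous_id).continuousAt

theorem Real.cos_add_sin_sq_div_two_le_one (x : ℝ) : cos x + sin x ^ 2 / 2 ≤ 1 := by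
  nlinarith [sin_sq_add_cos_sq x, sq_nonneg (1 - cos x)]

theorem Real.eq_add_two_pi_mul_of_sin_eq_zero_of_cos_pos {x m : ℝ} (hs : sin (x - m) = 0)
    (hc : 0 < cos (x - m)) : ∃ k : ℤ, x = m + 2 * π * k := by
  obtain h1 | h1 := sin_eq_zero_iff_cos_eq.mp hs
  · obtain ⟨k, hk⟩ := (cos_eq_one_iff _).mp h1
    exact ⟨k, by linarith⟩
  · linarith

theorem Real.isLocalMax_mul_cos_add_mul_sin_zero {a b : ℝ}
    (h : IsLocalMax (fun t => a * cos t + b * sin t) 0) : b = 0 ∧ 0 ≤ a := by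
  have hderiv : HasDerivAt (fun t => a * cos t + b * sin t) b 0 :=
    (((hasDerivAt_cos 0).const_mul a).add ((hasDerivAt_sin 0).const_mul b)).congr_deriv
      (by simp)
  have hb : b = 0 := h.hasDerivAt_eq_zero hderiv
  refine ⟨hb, ?_⟩
  by_contra! ha
  obtain ⟨t, ⟨hmax, hπ⟩, ht0⟩ := (((h.filter_mono nhdsWithin_le_nhds).and
    ((eventually_abs_sub_lt 0 pi_pos).filter_mono nhdsWithin_le_nhds)).and
    (self_mem_nhdsWithin : {t : ℝ | t ≠ 0} ∈ 𝓝[≠] 0)).exists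
  have hcos := cos_le_one_sub_mul_cos_sq (x := t) (by simpa using hπ.le)
  have : 0 < 2 / π ^ 2 * t ^ 2 := by have : t ≠ 0 := ht0; positivity
  simp only [hb, zero_mul, add_zero, cos_zero, mul_one] at hmax
  nlinarith

theorem Real.mul_sin_sub_eq_and_cos_sub_pos_of_isLocalMax {a b m x : ℝ} (ha : 0 < a)
    (h : IsLocalMax (fun t => a * cos (t - m) + b * sin (t - m)) x) :
    a * sin (x - m) = b * cos (x - m) ∧ 0 < cos (x - m) := by
  set y := x - m
  -- Around `x` the sinusoid is `D cos t + E sin t`; stationarity `E = 0` gives `D cos y = a`.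
  have h0 : IsLocalMax ((fun t => a * cos (t - m) + b * sin (t - m)) ∘ (x + ·)) 0 :=
    IsLocalMax.comp_continuous (by rwa [add_zero]) (continuous_const_add x).continuousAt
  have hshift : (fun t => a * cos (t - m) + b * sin (t - m)) ∘ (x + ·)
      = fun t => (a * cos y + b * sin y) * cos t + (b * cos y - a * sin y) * sin t := by
    funext t
    rw [Function.comp_apply, show x + t - m = y + t by ring, cos_add, sin_add]
    ring
  rw [hshift] at h0
  obtain ⟨hcrit, hD⟩ := isLocalMax_mul_cos_add_mul_sin_zero h0
  have hDcos : (a * cos y + b * sin y) * cos y = a := by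
    linear_combination sin y * hcrit + a * sin_sq_add_cos_sq y
  exact ⟨by linarith, pos_of_mul_pos_right (by rwa [hDcos]) hD⟩

namespace MultivariateVonMises

variable {ι : Type*} [Fintype ι] (μ κ : ι → ℝ) (Λ : Matrix ι ι ℝ)

noncomputable def cosDiff (θ : ι → ℝ) : ι → ℝ := fun i => cos (θ i - μ i)

noncomputable def sinDiff (θ : ι → ℝ) : ι → ℝ := fun i => sin (θ i - μ i)

/-- The function `f` of the paper: the density of `MVM(μ, κ, Λ)` is proportional to
`exp (exponent μ κ Λ θ)`. -/
noncomputable def exponent (θ : ι → ℝ) : ℝ :=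
  κ ⬝ᵥ cosDiff μ θ + 1 / 2 * (sinDiff μ θ ⬝ᵥ Λ *ᵥ sinDiff μ θ)

theorem exponent_self : exponent μ κ Λ μ = ∑ i, κ i := by
  simp [exponent, cosDiff, sinDiff, dotProduct]

variable [DecidableEq ι]

theorem exponent_le (hκ : ∀ i, 0 ≤ κ i) (hP : (diagonal κ - Λ).PosSemidef) (θ : ι → ℝ) :
    exponent μ κ Λ θ ≤ ∑ i, κ i := by
  have hquad : sinDiff μ θ ⬝ᵥ Λ *ᵥ sinDiff μ θ ≤ ∑ i, κ i * sin (θ i - μ i) ^ 2 := by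
    have := hP.dotProduct_mulVec_nonneg (sinDiff μ θ)
    rw [star_trivial, dotProduct_diagonal_sub_mulVec] at this
    simpa [sinDiff] using this
  calc exponent μ κ Λ θ ≤ ∑ i, (κ i * cos (θ i - μ i) + κ i * sin (θ i - μ i) ^ 2 / 2) := by
        have hcos : κ ⬝ᵥ cosDiff μ θ = ∑ i, κ i * cos (θ i - μ i) := rfl
        rw [exponent, hcos, Finset.sum_add_distrib, ← Finset.sum_div]
        linarith
    _ ≤ ∑ i, κ i := Finset.sum_le_sum fun i _ => by
        nlinarith [cos_add_sin_sq_div_two_le_one (θ i - μ i), hκ i]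

theorem exponent_update (hΛ : Λ.IsSymm) (hΛdiag : ∀ i, Λ i i = 0) (θ : ι → ℝ) (i : ι) (t : ℝ) :
    exponent μ κ Λ (Function.update θ i t) = exponent μ κ Λ θ
      + κ i * (cos (t - μ i) - cos (θ i - μ i))
      + (Λ *ᵥ sinDiff μ θ) i * (sin (t - μ i) - sin (θ i - μ i)) := by
  have hcos : cosDiff μ (Function.update θ i t)
      = cosDiff μ θ + Pi.single i (cos (t - μ i) - cos (θ i - μ i)) :=
    Function.apply_update_eq_add_single (fun j x => cos (x - μ j)) θ i t
  have hsin : sinDiff μ (Function.update θ i t)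
      = sinDiff μ θ + Pi.single i (sin (t - μ i) - sin (θ i - μ i)) :=
    Function.apply_update_eq_add_single (fun j x => sin (x - μ j)) θ i t
  rw [exponent, exponent, hcos, hsin, dotProduct_add, dotProduct_single,
    hΛ.dotProduct_mulVec_add_single, hΛdiag]
  ring

theorem mul_sin_eq_and_cos_pos_of_isLocalMax (hΛ : Λ.IsSymm) (hΛdiag : ∀ i, Λ i i = 0)
    {θ : ι → ℝ} (h : IsLocalMax (exponent μ κ Λ) θ) {i : ι} (hκ : 0 < κ i) :
    κ i * sin (θ i - μ i) = (Λ *ᵥ sinDiff μ θ) i * cos (θ i - μ i) ∧ 0 < cos (θ i - μ i) := by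
  set b := (Λ *ᵥ sinDiff μ θ) i
  apply mul_sin_sub_eq_and_cos_sub_pos_of_isLocalMax hκ
  have := (h.update i).sub (isLocalMin_const
    (b := exponent μ κ Λ θ - κ i * cos (θ i - μ i) - b * sin (θ i - μ i)))
  refine this.congr (.of_forall fun t => ?_)
  dsimp only
  rw [exponent_update μ κ Λ hΛ hΛdiag]
  ring

theorem sinDiff_eq_zero_of_isLocalMax (hΛdiag : ∀ i, Λ i i = 0) (hP : (diagonal κ - Λ).PosDef)
    {θ : ι → ℝ} (h : IsLocalMax (exponent μ κ Λ) θ) : sinDiff μ θ = 0 := by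
  set s := sinDiff μ θ
  have hterm : ∀ i, κ i * s i ^ 2 ≤ s i * (Λ *ᵥ s) i := fun i => by
    have hκ := hP.pos_of_diagonal_sub hΛdiag i
    obtain ⟨hcrit, hcos⟩ :=
      mul_sin_eq_and_cos_pos_of_isLocalMax μ κ Λ hP.isSymm_of_diagonal_sub hΛdiag h hκ
    have h1 : s i * (Λ *ᵥ s) i * cos (θ i - μ i) = κ i * s i ^ 2 := by
      simp only [s, sinDiff] at hcrit ⊢
      linear_combination -(sin (θ i - μ i)) * hcrit
    have hsb : 0 ≤ s i * (Λ *ᵥ s) i :=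
      nonneg_of_mul_nonneg_left (h1 ▸ mul_nonneg hκ.le (sq_nonneg _)) hcos
    nlinarith [mul_nonneg hsb (sub_nonneg.2 (cos_le_one (θ i - μ i)))]
  have hnonpos : s ⬝ᵥ (diagonal κ - Λ) *ᵥ s ≤ 0 := by
    rw [dotProduct_diagonal_sub_mulVec, sub_nonpos]
    exact Finset.sum_le_sum fun i _ => hterm i
  by_contra hs
  exact (hP.dotProduct_mulVec_pos hs).not_ge (by simpa using hnonpos)

end MultivariateVonMises

open MultivariateVonMises in
theorem stmt_0_general (p : ℕ) (μ κ : Fin p → ℝ)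
    (Λ : Matrix (Fin p) (Fin p) ℝ)
    (hΛdiag : ∀ i, Λ i i = 0)
    (hP : (Matrix.diagonal κ - Λ).PosDef)
    (f : (Fin p → ℝ) → ℝ)
    (hf : ∀ θ, f θ = ∑ i, κ i * Real.cos (θ i - μ i)
        + (1 / 2) * ∑ i, ∑ j, Real.sin (θ i - μ i) * Λ i j * Real.sin (θ j - μ j)) :
    IsLocalMax f μ ∧ (∀ θ, f θ ≤ f μ) ∧
      (∀ θ, IsLocalMax f θ → ∀ i, ∃ k : ℤ, θ i = μ i + 2 * π * (k : ℝ)) := by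
  obtain rfl : f = exponent μ κ Λ := funext fun θ => by
    rw [hf, exponent, ← sum_sum_mul_mul_eq_dotProduct_mulVec]
    rfl
  have hmax : ∀ θ, exponent μ κ Λ θ ≤ exponent μ κ Λ μ := fun θ => by
    rw [exponent_self]
    exact exponent_le μ κ Λ (fun i => (hP.pos_of_diagonal_sub hΛdiag i).le) hP.posSemidef θ
  refine ⟨.of_forall hmax, hmax, fun θ hθ i => ?_⟩
  have hκ := hP.pos_of_diagonal_sub hΛdiag i
  exact eq_add_two_pi_mul_of_sin_eq_zero_of_cos_pos
    (congrFun (sinDiff_eq_zero_of_isLocalMax μ κ Λ hΛdiag hP hθ) i)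
    (mul_sin_eq_and_cos_pos_of_isLocalMax μ κ Λ hP.isSymm_of_diagonal_sub hΛdiag hθ hκ).2

/-- Proposition 1 (high concentration): if `P = diag κ - Λ` is positive definite, then
`θ = μ` is a local maximum of `f`, every local maximum of `f` has all coordinates
congruent to those of `μ` modulo `2π`, and the global maximum of the multivariate
von Mises log-density `f` is attained at `μ`. -/
theorem stmt_0 (p : ℕ) (hp : 1 ≤ p) (μ κ : Fin p → ℝ)
    (hκ : ∀ i, 0 ≤ κ i)
    (Λ : Matrix (Fin p) (Fin p) ℝ) (hΛsym : Λ.IsSymm)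
    (hΛdiag : ∀ i, Λ i i = 0)
    (hP : (Matrix.diagonal κ - Λ).PosDef)
    (f : (Fin p → ℝ) → ℝ)
    (hf : ∀ θ, f θ = ∑ i, κ i * Real.cos (θ i - μ i)
        + (1 / 2) * ∑ i, ∑ j, Real.sin (θ i - μ i) * Λ i j * Real.sin (θ j - μ j)) :
    IsLocalMax f μ ∧ (∀ θ, f θ ≤ f μ) ∧
      (∀ θ, IsLocalMax f θ → ∀ i, ∃ k : ℤ, θ i = μ i + 2 * π * (k : ℝ)) :=
  stmt_0_general p μ κ Λ hΛdiag hP f hf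
end

section
/- Assume κ_i > 0 for all i. If θ is a critical point of f (i.e. ∇f(θ) = 0) and c_i(θ) < 0 for some index i, then θ is not a local maximum of f. (At such a critical point the i-th diagonal entry of the Hessian of f equals −κ_i/c_i(θ) > 0, so the Hessian has a positive eigenvalue.) -/
open Real

/-- Quadratic form difference when two vectors differ only at one coordinate. -/
lemma quad_update {p : ℕ} (Λ : Matrix (Fin p) (Fin p) ℝ) (hΛsym : Λ.IsSymm)
    (hΛdiag : ∀ i, Λ i i = 0) (i : Fin p) (w : Fin p → ℝ) (b : ℝ) :
    ∑ j, ∑ k, (Function.update w i b) j * Λ j k * (Function.update w i b) k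
      = ∑ j, ∑ k, w j * Λ j k * w k + 2 * (b - w i) * ∑ k, Λ i k * w k := by
  classical
  have hsym : ∀ j k, Λ j k = Λ k j := fun j k => by
    conv_lhs => rw [← hΛsym]
    rfl
  set d : ℝ := b - w i with hd
  have split : ∀ j k, (Function.update w i b) j * Λ j k * (Function.update w i b) k =
      w j * Λ j k * w k
      + (if j = i then d * Λ i k * w k else 0)
      + (if k = i then w j * Λ j i * d else 0)
      + (if j = i then (if k = i then d * Λ i i * d else 0) else 0) := by
    intro j k
    rcases eq_or_ne j i with hj | hj <;> rcases eq_or_ne k i with hk | hk <;>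
      simp [Function.update_apply, hj, hk, hd] <;> ring
  simp only [split, Finset.sum_add_distrib]
  have T1 : ∑ j : Fin p, ∑ k : Fin p, (if j = i then d * Λ i k * w k else 0)
      = d * ∑ k, Λ i k * w k := by
    have : ∀ j : Fin p, (∑ k : Fin p, if j = i then d * Λ i k * w k else 0)
        = if j = i then ∑ k : Fin p, d * Λ i k * w k else 0 := by
      intro j; split_ifs <;> simp
    simp only [this, Finset.sum_ite_eq', Finset.mem_univ, if_true, Finset.mul_sum]
    exact Finset.sum_congr rfl fun k _ => by ring
  have T2 : ∑ j : Fin p, ∑ k : Fin p, (if k = i then w j * Λ j i * d else 0)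
      = d * ∑ k, Λ i k * w k := by
    simp only [Finset.sum_ite_eq', Finset.mem_univ, if_true, Finset.mul_sum]
    exact Finset.sum_congr rfl fun j _ => by rw [hsym j i]; ring
  have T3 : ∑ j : Fin p, ∑ k : Fin p,
      (if j = i then (if k = i then d * Λ i i * d else 0) else 0) = 0 := by
    simp [hΛdiag i]
  rw [T1, T2, T3]
  ring

/-- If all `κ i > 0`, `θ` is a critical point of `f`
(`∂ᵢf(θ) = -κᵢ sᵢ(θ) + cᵢ(θ) Σₖ λᵢₖ sₖ(θ) = 0` for all `i`) and `cᵢ(θ) < 0`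
for some index `i`, then `θ` is not a local maximum of `f`. -/
theorem stmt_2 (p : ℕ) (hp : 1 ≤ p) (μ κ : Fin p → ℝ)
    (hκ : ∀ i, 0 < κ i)
    (Λ : Matrix (Fin p) (Fin p) ℝ) (hΛsym : Λ.IsSymm)
    (hΛdiag : ∀ i, Λ i i = 0)
    (f : (Fin p → ℝ) → ℝ)
    (hf : ∀ θ, f θ = ∑ i, κ i * Real.cos (θ i - μ i)
        + (1 / 2) * ∑ i, ∑ j, Real.sin (θ i - μ i) * Λ i j * Real.sin (θ j - μ j))
    (θ : Fin p → ℝ)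
    (hcrit : ∀ i, -κ i * Real.sin (θ i - μ i)
        + Real.cos (θ i - μ i) * ∑ k, Λ i k * Real.sin (θ k - μ k) = 0)
    (i : Fin p) (hci : Real.cos (θ i - μ i) < 0) :
    ¬ IsLocalMax f θ := by
  classical
  intro h
  have hcne : Real.cos (θ i - μ i) ≠ 0 := ne_of_lt hci
  have hSv : (∑ k, Λ i k * Real.sin (θ k - μ k))
      = κ i * Real.sin (θ i - μ i) / Real.cos (θ i - μ i) := by
    have hc := hcrit i
    field_simp
    linarith
  -- the perturbation path
  set γ : ℝ → (Fin p → ℝ) := fun t => Function.update θ i (θ i + t) with hγ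
  have hγ0 : γ 0 = θ := by simp [hγ]
  have hγcont : Continuous γ := continuous_const.update i (by continuity)
  have htend : Filter.Tendsto γ (nhds 0) (nhds θ) := by
    have := hγcont.tendsto 0
    rwa [hγ0] at this
  have hev : ∀ᶠ t in nhds (0 : ℝ), f (γ t) ≤ f θ := htend.eventually h
  rw [Metric.eventually_nhds_iff] at hev
  obtain ⟨ε, hε, hball⟩ := hev
  set t : ℝ := min (ε / 2) 1 with ht
  have ht0 : 0 < t := lt_min (by linarith) one_pos
  have htε : dist t 0 < ε := by
    rw [Real.dist_eq, sub_zero, abs_of_pos ht0]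
    calc t ≤ ε / 2 := min_le_left _ _
    _ < ε := by linarith
  have hle := hball htε
  -- compute f (γ t)
  have hval : f (γ t) = f θ + (κ i / Real.cos (θ i - μ i)) * (Real.cos t - 1) := by
    rw [hf, hf]
    have hcossum : ∑ j, κ j * Real.cos (γ t j - μ j)
        = ∑ j, κ j * Real.cos (θ j - μ j)
          + κ i * (Real.cos (θ i - μ i + t) - Real.cos (θ i - μ i)) := by
      have heq : ∀ j, κ j * Real.cos (γ t j - μ j)
          = Function.update (fun j => κ j * Real.cos (θ j - μ j)) i
              (κ i * Real.cos (θ i - μ i + t)) j := by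
        intro j
        by_cases hj : j = i
        · subst hj
          simp only [hγ, Function.update_self]
          congr 1
          ring
        · simp [hγ, Function.update_of_ne hj]
      rw [Finset.sum_congr rfl (fun j _ => heq j)]
      rw [Finset.sum_update_of_mem (Finset.mem_univ i)]
      have hdecomp : ∑ j, κ j * Real.cos (θ j - μ j)
          = κ i * Real.cos (θ i - μ i)
            + ∑ j ∈ Finset.univ \ {i}, κ j * Real.cos (θ j - μ j) := by
        rw [Finset.sum_eq_add_sum_sdiff_singleton_of_mem (Finset.mem_univ i)]
      linarith
    have hquad : ∑ j, ∑ k, Real.sin (γ t j - μ j) * Λ j k * Real.sin (γ t k - μ k)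
        = ∑ j, ∑ k, Real.sin (θ j - μ j) * Λ j k * Real.sin (θ k - μ k)
          + 2 * (Real.sin (θ i - μ i + t) - Real.sin (θ i - μ i))
            * ∑ k, Λ i k * Real.sin (θ k - μ k) := by
      have hsinupd : ∀ j, Real.sin (γ t j - μ j)
          = Function.update (fun j => Real.sin (θ j - μ j)) i
              (Real.sin (θ i - μ i + t)) j := by
        intro j
        by_cases hj : j = i
        · subst hj
          simp only [hγ, Function.update_self]
          congr 1
          ring
        · simp [hγ, Function.update_of_ne hj]
      rw [Finset.sum_congr rfl (fun j _ => Finset.sum_congr rfl (fun k _ => by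
        rw [hsinupd j, hsinupd k]))]
      exact quad_update Λ hΛsym hΛdiag i _ _
    rw [hcossum, hquad, hSv]
    have hcosadd : Real.cos (θ i - μ i + t) * Real.cos (θ i - μ i)
        + Real.sin (θ i - μ i + t) * Real.sin (θ i - μ i) = Real.cos t := by
      rw [← Real.cos_sub]
      congr 1
      ring
    have hsc := Real.sin_sq_add_cos_sq (θ i - μ i)
    field_simp
    linear_combination 2 * κ i * hcosadd - 2 * κ i * hsc
  -- contradiction
  have hcost : Real.cos t < 1 := by
    have := Real.cos_lt_cos_of_nonneg_of_le_pi (le_refl 0) ?_ ht0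
    · rwa [Real.cos_zero] at this
    · calc t ≤ 1 := min_le_right _ _
      _ ≤ π := by linarith [Real.pi_gt_three]
  have hpos : 0 < (κ i / Real.cos (θ i - μ i)) * (Real.cos t - 1) :=
    mul_pos_of_neg_of_neg (div_neg_of_pos_of_neg (hκ i) hci) (by linarith)
  rw [hval] at hle
  linarith
end

section
/- Assume P = diag(κ₁, …, κ_p) − Λ is positive definite. If θ is a critical point of f with c_i(θ) > 0 for all i, then s_i(θ) = 0 for all i, i.e. θ_i ≡ μ_i (mod 2π) for every i. -/
/-!
Write `sᵢ = sin(θᵢ - μᵢ)` and `cᵢ = cos(θᵢ - μᵢ)`. Criticality says `cᵢ (Λ s)ᵢ = κᵢ sᵢ`, so the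
quadratic form of `P = diag κ - Λ` at `s` is `∑ᵢ κᵢ sᵢ² (1 - 1/cᵢ)`, which is `≤ 0` because
`0 < cᵢ ≤ 1`. Positive definiteness forces `s = 0`, and `sᵢ = 0` with `cᵢ > 0` means
`θᵢ - μᵢ ∈ 2πℤ`.
-/

open Real Matrix

namespace Matrix

variable {n : Type*} [Fintype n] [DecidableEq n]

theorem dotProduct_diagonal_sub_mulVec_s3 (κ s : n → ℝ) (Λ : Matrix n n ℝ) :
    s ⬝ᵥ (diagonal κ - Λ) *ᵥ s = ∑ i, s i * (κ i * s i - (Λ *ᵥ s) i) := by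
  simp only [sub_mulVec, mulVec_diagonal, dotProduct, Pi.sub_apply]

theorem eq_zero_of_posDef_diagonal_sub {κ c s : n → ℝ} {Λ : Matrix n n ℝ}
    (hP : (diagonal κ - Λ).PosDef) (hκ : ∀ i, 0 ≤ κ i)
    (hc : ∀ i, 0 < c i) (hc_le : ∀ i, c i ≤ 1)
    (hs : ∀ i, c i * (Λ *ᵥ s) i = κ i * s i) : s = 0 := by
  by_contra hne
  have hpos : 0 < s ⬝ᵥ (diagonal κ - Λ) *ᵥ s := by
    simpa only [star_trivial] using hP.dotProduct_mulVec_pos hne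
  have hterm : ∀ i, s i * (κ i * s i - (Λ *ᵥ s) i) ≤ 0 := by
    intro i
    have hscaled : c i * (s i * (κ i * s i - (Λ *ᵥ s) i)) = κ i * s i ^ 2 * (c i - 1) := by
      linear_combination (-s i) * hs i
    have : κ i * s i ^ 2 * (c i - 1) ≤ 0 :=
      mul_nonpos_of_nonneg_of_nonpos (by have := hκ i; positivity) (by linarith [hc_le i])
    exact nonpos_of_mul_nonpos_right (hscaled ▸ this) (hc i)
  rw [dotProduct_diagonal_sub_mulVec_s3] at hpos
  exact hpos.not_ge (Finset.sum_nonpos fun i _ => hterm i)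

end Matrix

theorem Real.exists_int_eq_two_pi_mul_of_sin_eq_zero_of_cos_pos {x : ℝ} (hs : sin x = 0)
    (hc : 0 < cos x) : ∃ k : ℤ, x = 2 * π * k := by
  have hcos : cos x = 1 := (sin_eq_zero_iff_cos_eq.mp hs).resolve_right (by linarith)
  obtain ⟨k, hk⟩ := (cos_eq_one_iff x).mp hcos
  exact ⟨k, by rw [← hk]; ring⟩

theorem stmt_3_general (p : ℕ) (μ κ : Fin p → ℝ)
    (hκ : ∀ i, 0 ≤ κ i)
    (Λ : Matrix (Fin p) (Fin p) ℝ)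
    (hP : (Matrix.diagonal κ - Λ).PosDef)
    (θ : Fin p → ℝ)
    (hcrit : ∀ i, -κ i * Real.sin (θ i - μ i)
        + Real.cos (θ i - μ i) * ∑ k, Λ i k * Real.sin (θ k - μ k) = 0)
    (hc : ∀ i, 0 < Real.cos (θ i - μ i)) :
    ∀ i, Real.sin (θ i - μ i) = 0 ∧ ∃ k : ℤ, θ i = μ i + 2 * π * (k : ℝ) := by
  have hs : (fun i => sin (θ i - μ i)) = 0 :=
    eq_zero_of_posDef_diagonal_sub hP hκ hc (fun i => cos_le_one _)
      fun i => by simp only [mulVec, dotProduct]; linear_combination hcrit i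
  intro i
  have hsi : sin (θ i - μ i) = 0 := congrFun hs i
  obtain ⟨k, hk⟩ := exists_int_eq_two_pi_mul_of_sin_eq_zero_of_cos_pos hsi (hc i)
  exact ⟨hsi, k, by linarith⟩

/-- If `P = diag κ - Λ` is positive definite and `θ` is a critical point of `f`
with `cᵢ(θ) > 0` for all `i`, then `sᵢ(θ) = 0` for all `i`, i.e.
`θᵢ ≡ μᵢ (mod 2π)` for every `i`. -/
theorem stmt_3 (p : ℕ) (hp : 1 ≤ p) (μ κ : Fin p → ℝ)
    (hκ : ∀ i, 0 ≤ κ i)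
    (Λ : Matrix (Fin p) (Fin p) ℝ) (hΛsym : Λ.IsSymm)
    (hΛdiag : ∀ i, Λ i i = 0)
    (hP : (Matrix.diagonal κ - Λ).PosDef)
    (θ : Fin p → ℝ)
    (hcrit : ∀ i, -κ i * Real.sin (θ i - μ i)
        + Real.cos (θ i - μ i) * ∑ k, Λ i k * Real.sin (θ k - μ k) = 0)
    (hc : ∀ i, 0 < Real.cos (θ i - μ i)) :
    ∀ i, Real.sin (θ i - μ i) = 0 ∧ ∃ k : ℤ, θ i = μ i + 2 * π * (k : ℝ) :=
  stmt_3_general p μ κ hκ Λ hP θ hcrit hc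
end

section
/- Assume κ_i > Σ_{j=1}^p |λ_{ij}| for all i = 1, …, p. Then, modulo 2π in each coordinate, the global maximum of f is attained exactly at θ = μ, the global minimum exactly at θ = (μ₁+π, …, μ_p+π), and these two points are the only local extrema of f. -/
open Real Finset

/-- Coordinates from the parallel + value conditions. -/
private lemma coords_aux {A B R u v : ℝ} (hR2 : R ^ 2 = A ^ 2 + B ^ 2) (hR : 0 < R)
    (h1 : A * v = B * u) (h2 : A * u + B * v = R) :
    u * R = A ∧ v * R = B := by
  constructor
  · have h3 : u * R * R = A * R := by linear_combination u * hR2 - B * h1 + A * h2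
    exact mul_right_cancel₀ hR.ne' h3
  · have h3 : v * R * R = B * R := by linear_combination v * hR2 + A * h1 + B * h2
    exact mul_right_cancel₀ hR.ne' h3

/-- One-variable lemma: a local max of `A cos t + B sin t` (with `A > 0`)
satisfies `cos x * R = A`, `sin x * R = B` where `R = √(A²+B²)`. -/
private lemma onevar_max (A B : ℝ) (hA : 0 < A) {x : ℝ}
    (h : IsLocalMax (fun t => A * Real.cos t + B * Real.sin t) x) :
    Real.cos x * Real.sqrt (A ^ 2 + B ^ 2) = A ∧
      Real.sin x * Real.sqrt (A ^ 2 + B ^ 2) = B := by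
  set R := Real.sqrt (A ^ 2 + B ^ 2) with hRdef
  have hR2 : R ^ 2 = A ^ 2 + B ^ 2 := Real.sq_sqrt (by positivity)
  have hRpos : 0 < R := Real.sqrt_pos.2 (by positivity)
  have hd : ∀ t : ℝ, HasDerivAt (fun t => A * Real.cos t + B * Real.sin t)
      (A * (-Real.sin t) + B * Real.cos t) t := fun t =>
    ((Real.hasDerivAt_cos t).const_mul A).add ((Real.hasDerivAt_sin t).const_mul B)
  have h0 : A * Real.sin x = B * Real.cos x := by
    have hz := h.deriv_eq_zero
    have := (hd x).deriv
    rw [this] at hz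
    linarith
  have pyth := Real.sin_sq_add_cos_sq x
  have hsq : (A * Real.cos x + B * Real.sin x) ^ 2 = R ^ 2 := by nlinarith [h0, pyth, hR2]
  have hcases : A * Real.cos x + B * Real.sin x = R ∨
      A * Real.cos x + B * Real.sin x = -R := by
    have : (A * Real.cos x + B * Real.sin x - R) * (A * Real.cos x + B * Real.sin x + R) = 0 := by
      nlinarith [hsq]
    rcases mul_eq_zero.1 this with h' | h'
    · left; linarith
    · right; linarith
  rcases hcases with hval | hval
  · exact coords_aux hR2 hRpos h0 hval
  · -- impossible: the point is a global minimum of a nonconstant function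
    exfalso
    obtain ⟨ε, hε, hball⟩ := Metric.eventually_nhds_iff.1 h
    set t := x + min ε π / 2 with ht
    have hπ := Real.pi_pos
    have hmin : 0 < min ε π := lt_min hε hπ
    have htd : dist t x < ε := by
      rw [Real.dist_eq, ht]
      have : |x + min ε π / 2 - x| = min ε π / 2 := by
        rw [show x + min ε π / 2 - x = min ε π / 2 by ring]
        exact abs_of_pos (by linarith)
      rw [this]
      have := min_le_left ε π
      linarith
    have hle : A * Real.cos t + B * Real.sin t ≤ A * Real.cos x + B * Real.sin x := hball htd
    have pytht := Real.sin_sq_add_cos_sq t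
    have hge : -R ≤ A * Real.cos t + B * Real.sin t := by
      nlinarith [sq_nonneg (A * Real.sin t - B * Real.cos t), pytht, hR2, hRpos]
    have hteq : A * Real.cos t + B * Real.sin t = -R := le_antisymm (by linarith) hge
    -- equality in Cauchy-Schwarz at t
    have hz : (A * Real.sin t - B * Real.cos t) ^ 2 = 0 := by
      linear_combination (A ^ 2 + B ^ 2) * pytht - hR2
        + (-(A * Real.cos t + B * Real.sin t - R)) * hteq
    have h0t : A * Real.sin t = B * Real.cos t := by
      have := pow_eq_zero_iff (n := 2) two_ne_zero |>.1 hz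
      linarith
    -- both x and t have coords (-A/R, -B/R)
    have hx' : Real.cos x * R = -A ∧ Real.sin x * R = -B := by
      have := coords_aux (A := -A) (B := -B) (R := R) (u := Real.cos x) (v := Real.sin x)
        (by linear_combination hR2) hRpos (by linarith [h0]) (by linarith [hval])
      constructor <;> linarith [this.1, this.2]
    have ht' : Real.cos t * R = -A ∧ Real.sin t * R = -B := by
      have := coords_aux (A := -A) (B := -B) (R := R) (u := Real.cos t) (v := Real.sin t)
        (by linear_combination hR2) hRpos (by linarith [h0t]) (by linarith [hteq])
      constructor <;> linarith [this.1, this.2]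
    have hcc : Real.cos t = Real.cos x :=
      mul_right_cancel₀ hRpos.ne' (ht'.1.trans hx'.1.symm)
    have hss : Real.sin t = Real.sin x :=
      mul_right_cancel₀ hRpos.ne' (ht'.2.trans hx'.2.symm)
    have hone : Real.cos (t - x) = 1 := by
      rw [Real.cos_sub, hcc, hss]
      linear_combination pyth
    obtain ⟨n, hn⟩ := (Real.cos_eq_one_iff _).1 hone
    have htx : t - x = min ε π / 2 := by rw [ht]; ring
    have h1 : (0 : ℝ) < (n : ℝ) * (2 * π) := by rw [hn, htx]; linarith
    have h2 : (n : ℝ) * (2 * π) ≤ π / 2 := by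
      rw [hn, htx]
      have := min_le_right ε π
      linarith
    have hn1 : 1 ≤ n := by
      by_contra hcon
      push_neg at hcon
      have hn0 : (n : ℝ) ≤ 0 := by exact_mod_cast Int.lt_add_one_iff.1 (by exact_mod_cast hcon)
      have := mul_nonpos_of_nonpos_of_nonneg hn0 (by positivity : (0:ℝ) ≤ 2 * π)
      linarith
    have hge1 : (1 : ℝ) ≤ (n : ℝ) := by exact_mod_cast hn1
    have h3 : 2 * π ≤ (n : ℝ) * (2 * π) := le_mul_of_one_le_left (by positivity) hge1
    linarith

/-- Shifted one-variable lemma with a constant term. -/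
private lemma onevar_shift (A B m C : ℝ) (hA : 0 < A) {x : ℝ}
    (h : IsLocalMax (fun t => A * Real.cos (t - m) + B * Real.sin (t - m) + C) x) :
    Real.cos (x - m) * Real.sqrt (A ^ 2 + B ^ 2) = A ∧
      Real.sin (x - m) * Real.sqrt (A ^ 2 + B ^ 2) = B := by
  have h1 : IsLocalMax (fun t => A * Real.cos (t - m) + B * Real.sin (t - m)) x :=
    h.mono fun y hy => by dsimp at hy ⊢; linarith
  have h2 : IsLocalMax (fun t => A * Real.cos t + B * Real.sin t) (x - m) := by
    have hc : ContinuousAt (fun t : ℝ => t + m) (x - m) := by fun_prop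
    have h3 := IsLocalMax.comp_continuous (f := fun t => A * Real.cos (t - m) + B * Real.sin (t - m))
      (g := fun t : ℝ => t + m) (b := x - m) (by simpa using h1) hc
    have : ((fun t => A * Real.cos (t - m) + B * Real.sin (t - m)) ∘ fun t : ℝ => t + m)
        = fun t => A * Real.cos t + B * Real.sin t := by
      funext t; simp
    rwa [this] at h3
  exact onevar_max A B hA h2

/-- Sum of an updated function. -/
private lemma sum_update_formula {p : ℕ} (G : Fin p → ℝ) (i : Fin p) (v : ℝ) :
    ∑ k, Function.update G i v k = (∑ k, G k) + (v - G i) := by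
  rw [Finset.sum_update_of_mem (Finset.mem_univ i)]
  have : ∑ k ∈ Finset.univ \ {i}, G k = (∑ k, G k) - G i := by
    rw [Finset.sum_sdiff_eq_sub (by simp)]
    simp
  rw [this]; ring

/-- Quadratic form under a single-coordinate update. -/
private lemma quad_update_formula {p : ℕ} (Λ : Matrix (Fin p) (Fin p) ℝ)
    (hΛsym : Λ.IsSymm) (hΛdiag : ∀ i, Λ i i = 0) (s : Fin p → ℝ) (i : Fin p) (v : ℝ) :
    ∑ k, ∑ j, Function.update s i v k * Λ k j * Function.update s i v j
      = (∑ k, ∑ j, s k * Λ k j * s j) + 2 * (v - s i) * ∑ j, Λ i j * s j := by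
  set d := v - s i with hd
  have hU : ∀ k, Function.update s i v k = s k + d * (if k = i then 1 else 0) := by
    intro k
    by_cases hk : k = i
    · subst hk; simp [hd]
    · simp [Function.update_of_ne hk, hk]
  have expand : ∀ k j, Function.update s i v k * Λ k j * Function.update s i v j
      = s k * Λ k j * s j + d * ((if k = i then 1 else 0) * (Λ k j * s j))
        + d * (s k * Λ k j * (if j = i then 1 else 0))
        + d * d * ((if k = i then 1 else 0) * ((if j = i then 1 else 0) * Λ k j)) := by
    intro k j; rw [hU k, hU j]; ring
  calc ∑ k, ∑ j, Function.update s i v k * Λ k j * Function.update s i v j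
      = ∑ k, ∑ j, (s k * Λ k j * s j + d * ((if k = i then 1 else 0) * (Λ k j * s j))
        + d * (s k * Λ k j * (if j = i then 1 else 0))
        + d * d * ((if k = i then 1 else 0) * ((if j = i then 1 else 0) * Λ k j))) := by
        exact Finset.sum_congr rfl fun k _ => Finset.sum_congr rfl fun j _ => expand k j
    _ = (∑ k, ∑ j, s k * Λ k j * s j) + 2 * d * ∑ j, Λ i j * s j := by
        simp only [Finset.sum_add_distrib, ite_mul, one_mul, zero_mul, mul_ite, mul_zero,
          mul_one, Finset.sum_ite_irrel, Finset.sum_const_zero, Finset.sum_ite_eq',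
          Finset.mem_univ, if_true, ← Finset.mul_sum]
        rw [hΛdiag i]
        have hswap : ∑ k, s k * Λ k i = ∑ j, Λ i j * s j := by
          refine Finset.sum_congr rfl fun k _ => ?_
          rw [hΛsym.apply]; ring
        rw [hswap]
        ring

/-- Quadratic form bound via diagonal dominance. -/
private lemma quad_bound {p : ℕ} (Λ : Matrix (Fin p) (Fin p) ℝ) (hΛsym : Λ.IsSymm)
    (s : Fin p → ℝ) :
    ∑ i, ∑ j, s i * Λ i j * s j ≤ ∑ i, s i ^ 2 * ∑ j, |Λ i j| := by
  have step1 : ∑ i, ∑ j, s i * Λ i j * s j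
      ≤ ∑ i, ∑ j, |Λ i j| * ((s i ^ 2 + s j ^ 2) / 2) := by
    refine Finset.sum_le_sum fun i _ => Finset.sum_le_sum fun j _ => ?_
    nlinarith [mul_nonneg (sub_nonneg.2 (le_abs_self (Λ i j))) (sq_nonneg (s i + s j)),
      mul_nonneg (sub_nonneg.2 (neg_abs_le (Λ i j))) (sq_nonneg (s i - s j)),
      abs_nonneg (Λ i j)]
  have step2 : ∑ i, ∑ j, |Λ i j| * ((s i ^ 2 + s j ^ 2) / 2)
      = ∑ i, s i ^ 2 * ∑ j, |Λ i j| := by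
    have split : ∀ i j : Fin p, |Λ i j| * ((s i ^ 2 + s j ^ 2) / 2)
        = |Λ i j| * s i ^ 2 / 2 + |Λ i j| * s j ^ 2 / 2 := fun i j => by ring
    simp only [split, Finset.sum_add_distrib]
    have hsecond : ∑ i, ∑ j, |Λ i j| * s j ^ 2 / 2 = ∑ i, ∑ j, |Λ i j| * s i ^ 2 / 2 := by
      rw [Finset.sum_comm]
      refine Finset.sum_congr rfl fun i _ => Finset.sum_congr rfl fun j _ => ?_
      rw [hΛsym.apply]
    rw [hsecond]
    rw [← Finset.sum_add_distrib]
    refine Finset.sum_congr rfl fun i _ => ?_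
    rw [← Finset.sum_add_distrib, Finset.mul_sum]
    refine Finset.sum_congr rfl fun j _ => by ring
  linarith [step1, step2.le, step2.ge]

/-- Contraction argument: the extremum conditions force all sines to vanish
and all cosines to equal one. -/
private lemma extr_aux {p : ℕ} (hp : 1 ≤ p) (κ : Fin p → ℝ)
    (Λ : Matrix (Fin p) (Fin p) ℝ) (hdom : ∀ i, ∑ j, |Λ i j| < κ i)
    (x W : Fin p → ℝ)
    (hW : ∀ i, |W i| ≤ ∑ j, |Λ i j| * |Real.sin (x j)|)
    (hcs : ∀ i, Real.cos (x i) * Real.sqrt (κ i ^ 2 + W i ^ 2) = κ i ∧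
        Real.sin (x i) * Real.sqrt (κ i ^ 2 + W i ^ 2) = W i) :
    ∀ i, ∃ k : ℤ, x i = 2 * π * (k : ℝ) := by
  have hLnn : ∀ i, (0:ℝ) ≤ ∑ j, |Λ i j| := fun i =>
    Finset.sum_nonneg fun j _ => abs_nonneg _
  have hκpos : ∀ i, 0 < κ i := fun i => lt_of_le_of_lt (hLnn i) (hdom i)
  have hRK : ∀ i, κ i ≤ Real.sqrt (κ i ^ 2 + W i ^ 2) := by
    intro i
    have : κ i = Real.sqrt (κ i ^ 2) := (Real.sqrt_sq (hκpos i).le).symm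
    rw [this]
    exact Real.sqrt_le_sqrt (by nlinarith [sq_nonneg (W i), Real.sq_sqrt (hκpos i).le])
  have hstep : ∀ i, κ i * |Real.sin (x i)| ≤ ∑ j, |Λ i j| * |Real.sin (x j)| := by
    intro i
    have h1 : |Real.sin (x i)| * Real.sqrt (κ i ^ 2 + W i ^ 2) = |W i| := by
      calc |Real.sin (x i)| * Real.sqrt (κ i ^ 2 + W i ^ 2)
          = |Real.sin (x i) * Real.sqrt (κ i ^ 2 + W i ^ 2)| := by
            rw [abs_mul, abs_of_nonneg (Real.sqrt_nonneg _)]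
        _ = |W i| := by rw [(hcs i).2]
    calc κ i * |Real.sin (x i)| ≤ Real.sqrt (κ i ^ 2 + W i ^ 2) * |Real.sin (x i)| :=
          mul_le_mul_of_nonneg_right (hRK i) (abs_nonneg _)
      _ = |W i| := by rw [mul_comm]; exact h1
      _ ≤ _ := hW i
  -- all sines vanish
  have hszero : ∀ j, Real.sin (x j) = 0 := by
    obtain ⟨i₀, -, hmax⟩ := Finset.exists_max_image Finset.univ
      (fun j => |Real.sin (x j)|) ⟨⟨0, hp⟩, Finset.mem_univ _⟩
    have hM : ∀ j, |Real.sin (x j)| ≤ |Real.sin (x i₀)| := fun j =>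
      hmax j (Finset.mem_univ j)
    have hbound : κ i₀ * |Real.sin (x i₀)| ≤ (∑ j, |Λ i₀ j|) * |Real.sin (x i₀)| := by
      calc κ i₀ * |Real.sin (x i₀)| ≤ ∑ j, |Λ i₀ j| * |Real.sin (x j)| := hstep i₀
        _ ≤ ∑ j, |Λ i₀ j| * |Real.sin (x i₀)| :=
          Finset.sum_le_sum fun j _ => mul_le_mul_of_nonneg_left (hM j) (abs_nonneg _)
        _ = _ := by rw [Finset.sum_mul]
    have hzero : |Real.sin (x i₀)| = 0 := by
      by_contra hne
      have hpos : 0 < |Real.sin (x i₀)| := lt_of_le_of_ne (abs_nonneg _) (Ne.symm hne)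
      nlinarith [hdom i₀]
    intro j
    have := hM j
    have := abs_nonneg (Real.sin (x j))
    have : |Real.sin (x j)| = 0 := le_antisymm (hzero ▸ hM j) (abs_nonneg _)
    exact abs_eq_zero.1 this
  intro i
  have hWzero : W i = 0 := by
    have h1 := hW i
    have h2 : ∑ j, |Λ i j| * |Real.sin (x j)| = 0 := by
      refine Finset.sum_eq_zero fun j _ => by rw [hszero j]; simp
    have := abs_nonneg (W i)
    have : |W i| = 0 := le_antisymm (h2 ▸ hW i) (abs_nonneg _)
    exact abs_eq_zero.1 this
  have hcos : Real.cos (x i) = 1 := by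
    have h1 := (hcs i).1
    rw [hWzero] at h1
    have h2 : Real.sqrt (κ i ^ 2 + 0 ^ 2) = κ i := by
      rw [show κ i ^ 2 + 0 ^ 2 = κ i ^ 2 by ring]
      exact Real.sqrt_sq (hκpos i).le
    rw [h2] at h1
    have := (hκpos i).ne'
    field_simp at h1
    exact h1
  obtain ⟨n, hn⟩ := (Real.cos_eq_one_iff _).1 hcos
  exact ⟨n, by linear_combination -hn⟩

/-- Corollary (diagonal dominance): if `κᵢ > Σⱼ |λᵢⱼ|` for all `i`, then, modulo `2π`
in each coordinate, the global maximum of `f` is attained exactly at `θ = μ`, the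
global minimum exactly at `θ = μ + (π, …, π)`, and these are the only local extrema. -/
theorem stmt_5 (p : ℕ) (hp : 1 ≤ p) (μ κ : Fin p → ℝ)
    (hκ : ∀ i, 0 ≤ κ i)
    (Λ : Matrix (Fin p) (Fin p) ℝ) (hΛsym : Λ.IsSymm)
    (hΛdiag : ∀ i, Λ i i = 0)
    (hdom : ∀ i, ∑ j, |Λ i j| < κ i)
    (f : (Fin p → ℝ) → ℝ)
    (hf : ∀ θ, f θ = ∑ i, κ i * Real.cos (θ i - μ i)
        + (1 / 2) * ∑ i, ∑ j, Real.sin (θ i - μ i) * Λ i j * Real.sin (θ j - μ j)) :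
    (∀ θ, f θ ≤ f μ) ∧
    (∀ θ, f θ = f μ → ∀ i, ∃ k : ℤ, θ i = μ i + 2 * π * (k : ℝ)) ∧
    (∀ θ, f (fun i => μ i + π) ≤ f θ) ∧
    (∀ θ, f θ = f (fun i => μ i + π) → ∀ i, ∃ k : ℤ, θ i = μ i + π + 2 * π * (k : ℝ)) ∧
    (∀ θ, IsLocalMax f θ → ∀ i, ∃ k : ℤ, θ i = μ i + 2 * π * (k : ℝ)) ∧
    (∀ θ, IsLocalMin f θ → ∀ i, ∃ k : ℤ, θ i = μ i + π + 2 * π * (k : ℝ)) := by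
  have hLnn : ∀ i, (0:ℝ) ≤ ∑ j, |Λ i j| := fun i =>
    Finset.sum_nonneg fun j _ => abs_nonneg _
  have hκpos : ∀ i, 0 < κ i := fun i => lt_of_le_of_lt (hLnn i) (hdom i)
  have hfμ : f μ = ∑ i, κ i := by rw [hf]; simp
  have hfμπ : f (fun i => μ i + π) = -∑ i, κ i := by
    rw [hf]
    simp only [show ∀ i : Fin p, μ i + π - μ i = π from fun i => by ring,
      Real.cos_pi, Real.sin_pi, zero_mul, mul_zero, Finset.sum_const_zero,
      mul_neg, mul_one, Finset.sum_neg_distrib]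
    ring
  -- upper bound
  have hub : ∀ θ : Fin p → ℝ, f θ ≤ f μ
      + ∑ i, (1 - Real.cos (θ i - μ i)) * ((∑ j, |Λ i j|) - κ i) := by
    intro θ
    rw [hf, hfμ]
    have hQ := quad_bound Λ hΛsym (fun i => Real.sin (θ i - μ i))
    have h2 : ∑ i, Real.sin (θ i - μ i) ^ 2 * ∑ j, |Λ i j|
        ≤ ∑ i, 2 * ((1 - Real.cos (θ i - μ i)) * ∑ j, |Λ i j|) := by
      refine Finset.sum_le_sum fun i _ => ?_
      have hpy := Real.sin_sq_add_cos_sq (θ i - μ i)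
      nlinarith [mul_nonneg (sq_nonneg (1 - Real.cos (θ i - μ i))) (hLnn i),
        mul_le_mul_of_nonneg_right hpy.le (hLnn i),
        mul_le_mul_of_nonneg_right hpy.ge (hLnn i)]
    have h3 : ∑ i, 2 * ((1 - Real.cos (θ i - μ i)) * ∑ j, |Λ i j|)
        = 2 * ∑ i, (1 - Real.cos (θ i - μ i)) * ∑ j, |Λ i j| := by
      rw [Finset.mul_sum]
    have h4 : (∑ i, κ i) + ∑ i, (1 - Real.cos (θ i - μ i)) * ((∑ j, |Λ i j|) - κ i)
        = (∑ i, κ i * Real.cos (θ i - μ i))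
          + ∑ i, (1 - Real.cos (θ i - μ i)) * ∑ j, |Λ i j| := by
      rw [← Finset.sum_add_distrib, ← Finset.sum_add_distrib]
      exact Finset.sum_congr rfl fun i _ => by ring
    linarith
  -- lower bound
  have hlb : ∀ θ : Fin p → ℝ, f (fun i => μ i + π)
      + ∑ i, (1 + Real.cos (θ i - μ i)) * (κ i - ∑ j, |Λ i j|) ≤ f θ := by
    intro θ
    rw [hf θ, hfμπ]
    have hQ' := quad_bound (-Λ) hΛsym.neg (fun i => Real.sin (θ i - μ i))
    simp only [Matrix.neg_apply, mul_neg, neg_mul, Finset.sum_neg_distrib, abs_neg] at hQ'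
    have hQ : -∑ i, Real.sin (θ i - μ i) ^ 2 * ∑ j, |Λ i j|
        ≤ ∑ i, ∑ j, Real.sin (θ i - μ i) * Λ i j * Real.sin (θ j - μ j) := by linarith
    have h2 : ∑ i, Real.sin (θ i - μ i) ^ 2 * ∑ j, |Λ i j|
        ≤ ∑ i, 2 * ((1 + Real.cos (θ i - μ i)) * ∑ j, |Λ i j|) := by
      refine Finset.sum_le_sum fun i _ => ?_
      have hpy := Real.sin_sq_add_cos_sq (θ i - μ i)
      nlinarith [mul_nonneg (sq_nonneg (1 + Real.cos (θ i - μ i))) (hLnn i),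
        mul_le_mul_of_nonneg_right hpy.le (hLnn i),
        mul_le_mul_of_nonneg_right hpy.ge (hLnn i)]
    have h3 : ∑ i, 2 * ((1 + Real.cos (θ i - μ i)) * ∑ j, |Λ i j|)
        = 2 * ∑ i, (1 + Real.cos (θ i - μ i)) * ∑ j, |Λ i j| := by
      rw [Finset.mul_sum]
    have h4 : (-∑ i, κ i) + ∑ i, (1 + Real.cos (θ i - μ i)) * (κ i - ∑ j, |Λ i j|)
        = (∑ i, κ i * Real.cos (θ i - μ i))
          - ∑ i, (1 + Real.cos (θ i - μ i)) * ∑ j, |Λ i j| := by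
      rw [← Finset.sum_neg_distrib, ← Finset.sum_add_distrib, ← Finset.sum_sub_distrib]
      exact Finset.sum_congr rfl fun i _ => by ring
    linarith
  -- update formula for f
  have hupd : ∀ (θ : Fin p → ℝ) (i : Fin p) (t : ℝ),
      f (Function.update θ i t) = f θ
        + κ i * (Real.cos (t - μ i) - Real.cos (θ i - μ i))
        + (∑ j, Λ i j * Real.sin (θ j - μ j))
          * (Real.sin (t - μ i) - Real.sin (θ i - μ i)) := by
    intro θ i t
    rw [hf (Function.update θ i t), hf θ]
    have hcosfun : ∀ k, κ k * Real.cos (Function.update θ i t k - μ k)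
        = Function.update (fun k => κ k * Real.cos (θ k - μ k)) i
            (κ i * Real.cos (t - μ i)) k := by
      intro k
      by_cases hk : k = i
      · subst hk; simp
      · simp [Function.update_of_ne hk]
    have hsinfun : ∀ k, Real.sin (Function.update θ i t k - μ k)
        = Function.update (fun k => Real.sin (θ k - μ k)) i (Real.sin (t - μ i)) k := by
      intro k
      by_cases hk : k = i
      · subst hk; simp
      · simp [Function.update_of_ne hk]
    have h1 : ∑ k, κ k * Real.cos (Function.update θ i t k - μ k)
        = (∑ k, κ k * Real.cos (θ k - μ k))
          + (κ i * Real.cos (t - μ i) - κ i * Real.cos (θ i - μ i)) := by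
      rw [Finset.sum_congr rfl fun k _ => hcosfun k, sum_update_formula]
    have h2 : ∑ k, ∑ j, Real.sin (Function.update θ i t k - μ k) * Λ k j
          * Real.sin (Function.update θ i t j - μ j)
        = (∑ k, ∑ j, Real.sin (θ k - μ k) * Λ k j * Real.sin (θ j - μ j))
          + 2 * (Real.sin (t - μ i) - Real.sin (θ i - μ i))
            * ∑ j, Λ i j * Real.sin (θ j - μ j) := by
      rw [Finset.sum_congr rfl fun k _ => Finset.sum_congr rfl fun j _ => by
        rw [hsinfun k, hsinfun j]]
      exact quad_update_formula Λ hΛsym hΛdiag _ i _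
    rw [h1, h2]
    ring
  -- extremum conditions at a local max of ±f
  have hmaxcond : ∀ θ : Fin p → ℝ, IsLocalMax f θ → ∀ i,
      Real.cos (θ i - μ i)
          * Real.sqrt (κ i ^ 2 + (∑ j, Λ i j * Real.sin (θ j - μ j)) ^ 2) = κ i ∧
        Real.sin (θ i - μ i)
          * Real.sqrt (κ i ^ 2 + (∑ j, Λ i j * Real.sin (θ j - μ j)) ^ 2)
          = ∑ j, Λ i j * Real.sin (θ j - μ j) := by
    intro θ hmax i
    set W : ℝ := ∑ j, Λ i j * Real.sin (θ j - μ j) with hWdef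
    have hg : ContinuousAt (fun t : ℝ => Function.update θ i t) (θ i) :=
      (continuous_const.update i continuous_id).continuousAt
    have hθeq : Function.update θ i (θ i) = θ := Function.update_eq_self i θ
    have hmax2 : IsLocalMax (f ∘ fun t : ℝ => Function.update θ i t) (θ i) := by
      refine IsLocalMax.comp_continuous ?_ hg
      rwa [hθeq]
    have hfg : (f ∘ fun t : ℝ => Function.update θ i t)
        = fun t => κ i * Real.cos (t - μ i) + W * Real.sin (t - μ i)
          + (f θ - κ i * Real.cos (θ i - μ i) - W * Real.sin (θ i - μ i)) := by
      funext t
      simp only [Function.comp_apply, hupd θ i t]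
      ring
    rw [hfg] at hmax2
    exact onevar_shift (κ i) W (μ i) _ (hκpos i) hmax2
  have hmincond : ∀ θ : Fin p → ℝ, IsLocalMin f θ → ∀ i,
      Real.cos (θ i - (μ i + π))
          * Real.sqrt (κ i ^ 2 + (∑ j, Λ i j * Real.sin (θ j - μ j)) ^ 2) = κ i ∧
        Real.sin (θ i - (μ i + π))
          * Real.sqrt (κ i ^ 2 + (∑ j, Λ i j * Real.sin (θ j - μ j)) ^ 2)
          = ∑ j, Λ i j * Real.sin (θ j - μ j) := by
    intro θ hmin i
    set W : ℝ := ∑ j, Λ i j * Real.sin (θ j - μ j) with hWdef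
    have hg : ContinuousAt (fun t : ℝ => Function.update θ i t) (θ i) :=
      (continuous_const.update i continuous_id).continuousAt
    have hθeq : Function.update θ i (θ i) = θ := Function.update_eq_self i θ
    have hmax2 : IsLocalMax ((fun v => -f v) ∘ fun t : ℝ => Function.update θ i t) (θ i) := by
      refine IsLocalMax.comp_continuous ?_ hg
      rw [hθeq]
      exact hmin.neg
    have hfg : ((fun v => -f v) ∘ fun t : ℝ => Function.update θ i t)
        = fun t => κ i * Real.cos (t - (μ i + π)) + W * Real.sin (t - (μ i + π))
          + (-f θ + κ i * Real.cos (θ i - μ i) + W * Real.sin (θ i - μ i)) := by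
      funext t
      simp only [Function.comp_apply, hupd θ i t,
        show t - (μ i + π) = t - μ i - π by ring, Real.cos_sub_pi, Real.sin_sub_pi]
      ring
    rw [hfg] at hmax2
    exact onevar_shift (κ i) W (μ i + π) _ (hκpos i) hmax2
  have habsW : ∀ (θ : Fin p → ℝ) (i : Fin p),
      |∑ j, Λ i j * Real.sin (θ j - μ j)| ≤ ∑ j, |Λ i j| * |Real.sin (θ j - μ j)| := by
    intro θ i
    calc |∑ j, Λ i j * Real.sin (θ j - μ j)|
        ≤ ∑ j, |Λ i j * Real.sin (θ j - μ j)| := Finset.abs_sum_le_sum_abs _ _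
      _ = ∑ j, |Λ i j| * |Real.sin (θ j - μ j)| :=
        Finset.sum_congr rfl fun j _ => abs_mul _ _
  refine ⟨?_, ?_, ?_, ?_, ?_, ?_⟩
  · -- global max inequality
    intro θ
    have h1 := hub θ
    have h2 : ∑ i, (1 - Real.cos (θ i - μ i)) * ((∑ j, |Λ i j|) - κ i) ≤ 0 :=
      Finset.sum_nonpos fun i _ => mul_nonpos_of_nonneg_of_nonpos
        (by linarith [Real.cos_le_one (θ i - μ i)]) (by linarith [hdom i])
    linarith
  · -- equality case (max)
    intro θ hθ i
    have h1 := hub θ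
    have hnp : ∀ i ∈ Finset.univ,
        (1 - Real.cos (θ i - μ i)) * ((∑ j, |Λ i j|) - κ i) ≤ 0 := fun i _ =>
      mul_nonpos_of_nonneg_of_nonpos
        (by linarith [Real.cos_le_one (θ i - μ i)]) (by linarith [hdom i])
    have hsum0 : ∑ i, (1 - Real.cos (θ i - μ i)) * ((∑ j, |Λ i j|) - κ i) = 0 :=
      le_antisymm (Finset.sum_nonpos hnp) (by linarith)
    have hterm := (Finset.sum_eq_zero_iff_of_nonpos hnp).1 hsum0 i (Finset.mem_univ i)
    have hc1 : Real.cos (θ i - μ i) = 1 := by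
      rcases mul_eq_zero.1 hterm with h | h
      · linarith
      · exfalso; linarith [hdom i]
    obtain ⟨n, hn⟩ := (Real.cos_eq_one_iff _).1 hc1
    exact ⟨n, by linear_combination -hn⟩
  · -- global min inequality
    intro θ
    have h1 := hlb θ
    have h2 : (0:ℝ) ≤ ∑ i, (1 + Real.cos (θ i - μ i)) * (κ i - ∑ j, |Λ i j|) :=
      Finset.sum_nonneg fun i _ => mul_nonneg
        (by linarith [Real.neg_one_le_cos (θ i - μ i)]) (by linarith [hdom i])
    linarith
  · -- equality case (min)
    intro θ hθ i
    have h1 := hlb θ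
    have hnn : ∀ i ∈ Finset.univ,
        (0:ℝ) ≤ (1 + Real.cos (θ i - μ i)) * (κ i - ∑ j, |Λ i j|) := fun i _ =>
      mul_nonneg (by linarith [Real.neg_one_le_cos (θ i - μ i)]) (by linarith [hdom i])
    have hsum0 : ∑ i, (1 + Real.cos (θ i - μ i)) * (κ i - ∑ j, |Λ i j|) = 0 :=
      le_antisymm (by linarith) (Finset.sum_nonneg hnn)
    have hterm := (Finset.sum_eq_zero_iff_of_nonneg hnn).1 hsum0 i (Finset.mem_univ i)
    have hc1 : Real.cos (θ i - μ i) = -1 := by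
      rcases mul_eq_zero.1 hterm with h | h
      · linarith
      · exfalso; linarith [hdom i]
    have hc2 : Real.cos (θ i - μ i - π) = 1 := by
      rw [Real.cos_sub_pi, hc1]; norm_num
    obtain ⟨n, hn⟩ := (Real.cos_eq_one_iff _).1 hc2
    exact ⟨n, by linear_combination -hn⟩
  · -- local max
    intro θ hmax i
    have hall := hmaxcond θ hmax
    have := extr_aux hp κ Λ hdom (fun j => θ j - μ j)
      (fun j => ∑ k, Λ j k * Real.sin (θ k - μ k))
      (fun j => habsW θ j) (fun j => hall j) i
    obtain ⟨k, hk⟩ := this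
    exact ⟨k, by linarith⟩
  · -- local min
    intro θ hmin i
    have hall := hmincond θ hmin
    have hWabs : ∀ j, |∑ k, Λ j k * Real.sin (θ k - μ k)|
        ≤ ∑ k, |Λ j k| * |Real.sin (θ k - (μ k + π))| := by
      intro j
      refine le_trans (habsW θ j) (le_of_eq (Finset.sum_congr rfl fun k _ => ?_))
      rw [show θ k - μ k = θ k - (μ k + π) + π by ring, Real.sin_add_pi, abs_neg]
    have := extr_aux hp κ Λ hdom (fun j => θ j - (μ j + π))
      (fun j => ∑ k, Λ j k * Real.sin (θ k - μ k)) hWabs (fun j => hall j) i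
    obtain ⟨k, hk⟩ := this
    exact ⟨k, by linarith⟩
end

section
/- Assume κ_i > Σ_{j=1}^p |λ_{ij}| for all i. Then every critical point θ of f satisfies s_i(θ) = 0 for all i; equivalently, every critical point has θ_i ≡ μ_i or θ_i ≡ μ_i + π (mod 2π) for each i. -/
open Real

/-- If `κᵢ > Σⱼ |λᵢⱼ|` for all `i`, then every critical point `θ` of `f` satisfies
`sᵢ(θ) = 0` for all `i`; equivalently `θᵢ ≡ μᵢ` or `θᵢ ≡ μᵢ + π (mod 2π)`,
i.e. `θᵢ - μᵢ` is an integer multiple of `π`. -/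
theorem stmt_6 (p : ℕ) (hp : 1 ≤ p) (μ κ : Fin p → ℝ)
    (hκ : ∀ i, 0 ≤ κ i)
    (Λ : Matrix (Fin p) (Fin p) ℝ) (hΛsym : Λ.IsSymm)
    (hΛdiag : ∀ i, Λ i i = 0)
    (hdom : ∀ i, ∑ j, |Λ i j| < κ i)
    (θ : Fin p → ℝ)
    (hcrit : ∀ i, -κ i * Real.sin (θ i - μ i)
        + Real.cos (θ i - μ i) * ∑ k, Λ i k * Real.sin (θ k - μ k) = 0) :
    ∀ i, Real.sin (θ i - μ i) = 0 ∧ ∃ k : ℤ, θ i = μ i + (k : ℝ) * π := by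
  have hne : (Finset.univ : Finset (Fin p)).Nonempty := by
    simpa [Finset.univ_nonempty_iff] using Fin.pos_iff_nonempty.mp hp
  set s : Fin p → ℝ := fun i => Real.sin (θ i - μ i) with hs
  obtain ⟨i, -, hi⟩ := Finset.exists_max_image Finset.univ (fun i => |s i|) hne
  have hmax : ∀ j, |s j| ≤ |s i| := fun j => hi j (Finset.mem_univ j)
  have hzero : s i = 0 := by
    by_contra h
    have hpos : 0 < |s i| := abs_pos.mpr h
    have heq : κ i * s i = Real.cos (θ i - μ i) * ∑ k, Λ i k * s k := by
      have := hcrit i; linarith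
    have h1 : κ i * |s i| = |Real.cos (θ i - μ i)| * |∑ k, Λ i k * s k| := by
      rw [← abs_of_nonneg (hκ i), ← abs_mul, heq, abs_mul]
    have h2 : |∑ k, Λ i k * s k| ≤ (∑ k, |Λ i k|) * |s i| := by
      calc |∑ k, Λ i k * s k| ≤ ∑ k, |Λ i k * s k| := Finset.abs_sum_le_sum_abs _ _
        _ ≤ ∑ k, |Λ i k| * |s i| := by
            refine Finset.sum_le_sum fun k _ => ?_
            rw [abs_mul]
            exact mul_le_mul_of_nonneg_left (hmax k) (abs_nonneg _)
        _ = (∑ k, |Λ i k|) * |s i| := by rw [Finset.sum_mul]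
    have h3 : κ i * |s i| ≤ (∑ k, |Λ i k|) * |s i| := by
      calc κ i * |s i| = |Real.cos (θ i - μ i)| * |∑ k, Λ i k * s k| := h1
        _ ≤ 1 * |∑ k, Λ i k * s k| := by
            exact mul_le_mul_of_nonneg_right (abs_cos_le_one _) (abs_nonneg _)
        _ = |∑ k, Λ i k * s k| := one_mul _
        _ ≤ (∑ k, |Λ i k|) * |s i| := h2
    have := mul_lt_mul_of_pos_right (hdom i) hpos
    linarith
  intro j
  have hj : s j = 0 := abs_eq_zero.mp (le_antisymm (by simpa [hzero] using hmax j) (abs_nonneg _))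
  refine ⟨hj, ?_⟩
  obtain ⟨k, hk⟩ := Real.sin_eq_zero_iff.mp hj
  exact ⟨k, by linarith⟩
end

section
/- Assume κ_i > Σ_{j=1}^p |λ_{ij}| for all i, and let θ be a critical point of f with s_k(θ) = 0 for all k (so c_k(θ) ∈ {−1, +1} for all k). If c_i(θ) = 1 for some i, the Hessian matrix H_f(θ) has a negative eigenvalue; if c_j(θ) = −1 for some j, H_f(θ) has a positive eigenvalue. In particular, any such critical point with coordinates of both signs is a saddle point (neither a local maximum nor a local minimum of f). -/
/-!
Since every `sₖ(θ)` vanishes and `λᵢᵢ = 0`, the Hessian is symmetric with diagonal entries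
`-κᵢ cᵢ(θ)`. A symmetric matrix all of whose eigenvalues are nonnegative is positive
semidefinite and so has a nonnegative diagonal; hence `cᵢ = 1` forces a negative eigenvalue,
and `cⱼ = -1` a positive one (apply the same to `-H`).

For the saddle statement, moving only the coordinate `θⱼ` by `t` changes `f` by exactly
`κⱼ cⱼ(θ) (cos t - 1)`: the quadratic term stays zero, since only `sⱼ` can become nonzero and
`λⱼⱼ = 0`. Thus `f` strictly decreases along the `i`-th axis and strictly increases along the
`j`-th axis at points `t` arbitrarily close to `0`.
-/

open Real Filter Topology Matrix

namespace Matrix.IsHermitian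

variable {n : Type*} [Fintype n] [DecidableEq n] {A : Matrix n n ℝ}

theorem exists_eigenvalue_neg_of_apply_self_neg (hA : A.IsHermitian) {i : n} (hi : A i i < 0) :
    ∃ (v : n → ℝ) (x : ℝ), v ≠ 0 ∧ A *ᵥ v = x • v ∧ x < 0 := by
  by_contra! h
  have hpsd : A.PosSemidef := hA.posSemidef_iff_eigenvalues_nonneg.mpr fun k =>
    h _ _ (by simpa using hA.eigenvectorBasis.orthonormal.ne_zero k) (hA.mulVec_eigenvectorBasis k)
  exact hi.not_ge hpsd.diag_nonneg

theorem exists_eigenvalue_pos_of_apply_self_pos (hA : A.IsHermitian) {i : n} (hi : 0 < A i i) :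
    ∃ (v : n → ℝ) (x : ℝ), v ≠ 0 ∧ A *ᵥ v = x • v ∧ 0 < x := by
  obtain ⟨v, x, hv, hAv, hx⟩ :=
    hA.neg.exists_eigenvalue_neg_of_apply_self_neg (i := i) (by simpa using hi)
  rw [neg_mulVec, neg_eq_iff_eq_neg] at hAv
  exact ⟨v, -x, hv, by rw [hAv, neg_smul], by linarith⟩

end Matrix.IsHermitian

theorem frequently_cos_lt_one : ∃ᶠ t in 𝓝 (0 : ℝ), cos t < 1 := by
  have : ∀ᶠ t in 𝓝[>] (0 : ℝ), cos t < 1 := by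
    filter_upwards [Ioo_mem_nhdsGT pi_pos] with t ht
    simpa using cos_lt_cos_of_nonneg_of_le_pi le_rfl ht.2.le ht.1
  exact this.frequently.filter_mono nhdsWithin_le_nhds

theorem tendsto_add_single_nhds {ι M : Type*} [DecidableEq ι] [TopologicalSpace M]
    [AddZeroClass M] [ContinuousAdd M] (θ : ι → M) (j : ι) :
    Tendsto (fun t : M => θ + Pi.single j t) (𝓝 0) (𝓝 θ) :=
  (continuous_const.add (continuous_single j)).tendsto' 0 θ (by simp)

section SineModel

variable {ι : Type*} [Fintype ι] (μ κ : ι → ℝ) (Λ : Matrix ι ι ℝ)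

noncomputable def sineModelEnergy (θ : ι → ℝ) : ℝ :=
  ∑ i, κ i * cos (θ i - μ i) + (1 / 2) * ∑ i, ∑ j, sin (θ i - μ i) * Λ i j * sin (θ j - μ j)

noncomputable def sineModelHessian [DecidableEq ι] (θ : ι → ℝ) : Matrix ι ι ℝ :=
  of fun i j =>
    (if i = j then -(κ i * cos (θ i - μ i) + sin (θ i - μ i) * ∑ k, Λ i k * sin (θ k - μ k))
      else 0)
    + cos (θ i - μ i) * Λ i j * cos (θ j - μ j)

variable [DecidableEq ι] {Λ}

theorem sineModelHessian_isHermitian (hΛ : Λ.IsSymm) (θ : ι → ℝ) :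
    (sineModelHessian μ κ Λ θ).IsHermitian := by
  refine IsHermitian.ext fun i j => ?_
  simp only [sineModelHessian, of_apply, star_trivial, hΛ.apply i j, eq_comm (a := j)]
  split_ifs with h
  · subst h; ring
  · ring

variable {μ κ} {θ : ι → ℝ}

theorem sineModelHessian_apply_self (hΛ : ∀ i, Λ i i = 0) (hs : ∀ k, sin (θ k - μ k) = 0)
    (i : ι) : sineModelHessian μ κ Λ θ i i = -(κ i * cos (θ i - μ i)) := by
  simp [sineModelHessian, hs, hΛ]

theorem sineModelEnergy_add_single (hΛ : ∀ i, Λ i i = 0) (hs : ∀ k, sin (θ k - μ k) = 0)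
    (j : ι) (t : ℝ) :
    sineModelEnergy μ κ Λ (θ + Pi.single j t)
      = sineModelEnergy μ κ Λ θ + κ j * cos (θ j - μ j) * (cos t - 1) := by
  have hsin : ∀ k, sin ((θ + Pi.single j t : ι → ℝ) k - μ k)
      = (Pi.single j (cos (θ j - μ j) * sin t) : ι → ℝ) k := by
    intro k
    rcases eq_or_ne k j with rfl | hk
    · simp [add_sub_right_comm, sin_add, hs]
    · simp [hk, hs]
  have hcos : ∀ k, cos ((θ + Pi.single j t : ι → ℝ) k - μ k)
      = cos (θ k - μ k) + (Pi.single j (cos (θ j - μ j) * (cos t - 1)) : ι → ℝ) k := by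
    intro k
    rcases eq_or_ne k j with rfl | hk
    · simp [add_sub_right_comm, cos_add, hs]; ring
    · simp [hk]
  simp only [sineModelEnergy, hsin, hcos, mul_add, Finset.sum_add_distrib]
  simp [Pi.single_apply, hΛ, hs]
  ring

theorem not_isLocalMin_sineModelEnergy (hΛ : ∀ i, Λ i i = 0) (hs : ∀ k, sin (θ k - μ k) = 0)
    {i : ι} (hκ : 0 < κ i) (hi : cos (θ i - μ i) = 1) :
    ¬IsLocalMin (sineModelEnergy μ κ Λ) θ := fun hmin => by
  obtain ⟨t, hle, ht⟩ :=
    (((tendsto_add_single_nhds θ i).eventually hmin).and_frequently frequently_cos_lt_one).exists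
  rw [sineModelEnergy_add_single hΛ hs, hi] at hle
  nlinarith

theorem not_isLocalMax_sineModelEnergy (hΛ : ∀ i, Λ i i = 0) (hs : ∀ k, sin (θ k - μ k) = 0)
    {j : ι} (hκ : 0 < κ j) (hj : cos (θ j - μ j) = -1) :
    ¬IsLocalMax (sineModelEnergy μ κ Λ) θ := fun hmax => by
  obtain ⟨t, hle, ht⟩ :=
    (((tendsto_add_single_nhds θ j).eventually hmax).and_frequently frequently_cos_lt_one).exists
  rw [sineModelEnergy_add_single hΛ hs, hj] at hle
  nlinarith

end SineModel

theorem stmt_8_general (p : ℕ) (μ κ : Fin p → ℝ)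
    (Λ : Matrix (Fin p) (Fin p) ℝ) (hΛsym : Λ.IsSymm)
    (hΛdiag : ∀ i, Λ i i = 0)
    (hdom : ∀ i, ∑ j, |Λ i j| < κ i)
    (f : (Fin p → ℝ) → ℝ)
    (hf : ∀ θ, f θ = ∑ i, κ i * Real.cos (θ i - μ i)
        + (1 / 2) * ∑ i, ∑ j, Real.sin (θ i - μ i) * Λ i j * Real.sin (θ j - μ j))
    (θ : Fin p → ℝ)
    (hs : ∀ k, Real.sin (θ k - μ k) = 0)
    (H : Matrix (Fin p) (Fin p) ℝ)
    (hH : ∀ i j, H i j =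
      (if i = j then
        -(κ i * Real.cos (θ i - μ i)
          + Real.sin (θ i - μ i) * ∑ k, Λ i k * Real.sin (θ k - μ k))
      else 0)
      + Real.cos (θ i - μ i) * Λ i j * Real.cos (θ j - μ j)) :
    ((∃ i, Real.cos (θ i - μ i) = 1) →
      ∃ (v : Fin p → ℝ) (x : ℝ), v ≠ 0 ∧ H.mulVec v = x • v ∧ x < 0) ∧
    ((∃ j, Real.cos (θ j - μ j) = -1) →
      ∃ (v : Fin p → ℝ) (x : ℝ), v ≠ 0 ∧ H.mulVec v = x • v ∧ 0 < x) ∧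
    ((∃ i, Real.cos (θ i - μ i) = 1) → (∃ j, Real.cos (θ j - μ j) = -1) →
      ¬ IsLocalMax f θ ∧ ¬ IsLocalMin f θ) := by
  obtain rfl : f = sineModelEnergy μ κ Λ := funext hf
  obtain rfl : H = sineModelHessian μ κ Λ θ := Matrix.ext hH
  have hκ : ∀ i, 0 < κ i := fun i =>
    (Finset.sum_nonneg fun j _ => abs_nonneg (Λ i j)).trans_lt (hdom i)
  have hHerm := sineModelHessian_isHermitian μ κ hΛsym θ
  have hdiag := sineModelHessian_apply_self (κ := κ) hΛdiag hs
  refine ⟨fun ⟨i, hi⟩ => hHerm.exists_eigenvalue_neg_of_apply_self_neg (i := i) ?_,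
    fun ⟨j, hj⟩ => hHerm.exists_eigenvalue_pos_of_apply_self_pos (i := j) ?_,
    fun ⟨i, hi⟩ ⟨j, hj⟩ => ⟨not_isLocalMax_sineModelEnergy hΛdiag hs (hκ j) hj,
      not_isLocalMin_sineModelEnergy hΛdiag hs (hκ i) hi⟩⟩
  · simpa [hdiag, hi] using hκ i
  · simpa [hdiag, hj] using hκ j

/-- Under diagonal dominance `κᵢ > Σⱼ |λᵢⱼ|`, at a critical point `θ` with
`sₖ(θ) = 0` for all `k` (so `cₖ(θ) ∈ {-1, 1}`), the Hessian `H` of `f` has a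
negative eigenvalue whenever some `cᵢ(θ) = 1` and a positive eigenvalue whenever
some `cⱼ(θ) = -1`; in particular a critical point with coordinates of both signs
is a saddle point (neither a local maximum nor a local minimum). -/
theorem stmt_8 (p : ℕ) (hp : 1 ≤ p) (μ κ : Fin p → ℝ)
    (hκ : ∀ i, 0 ≤ κ i)
    (Λ : Matrix (Fin p) (Fin p) ℝ) (hΛsym : Λ.IsSymm)
    (hΛdiag : ∀ i, Λ i i = 0)
    (hdom : ∀ i, ∑ j, |Λ i j| < κ i)
    (f : (Fin p → ℝ) → ℝ)
    (hf : ∀ θ, f θ = ∑ i, κ i * Real.cos (θ i - μ i)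
        + (1 / 2) * ∑ i, ∑ j, Real.sin (θ i - μ i) * Λ i j * Real.sin (θ j - μ j))
    (θ : Fin p → ℝ)
    (hcrit : ∀ i, -κ i * Real.sin (θ i - μ i)
        + Real.cos (θ i - μ i) * ∑ k, Λ i k * Real.sin (θ k - μ k) = 0)
    (hs : ∀ k, Real.sin (θ k - μ k) = 0)
    (H : Matrix (Fin p) (Fin p) ℝ)
    (hH : ∀ i j, H i j =
      (if i = j then
        -(κ i * Real.cos (θ i - μ i)
          + Real.sin (θ i - μ i) * ∑ k, Λ i k * Real.sin (θ k - μ k))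
      else 0)
      + Real.cos (θ i - μ i) * Λ i j * Real.cos (θ j - μ j)) :
    ((∃ i, Real.cos (θ i - μ i) = 1) →
      ∃ (v : Fin p → ℝ) (x : ℝ), v ≠ 0 ∧ H.mulVec v = x • v ∧ x < 0) ∧
    ((∃ j, Real.cos (θ j - μ j) = -1) →
      ∃ (v : Fin p → ℝ) (x : ℝ), v ≠ 0 ∧ H.mulVec v = x • v ∧ 0 < x) ∧
    ((∃ i, Real.cos (θ i - μ i) = 1) → (∃ j, Real.cos (θ j - μ j) = -1) →
      ¬ IsLocalMax f θ ∧ ¬ IsLocalMin f θ) :=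
  stmt_8_general p μ κ Λ hΛsym hΛdiag hdom f hf θ hs H hH
end

section
/- For κ = 0, the supremum of f over ℝ^p equals its maximum over the finite set of points θ with θ_i − μ_i ∈ {π/2, 3π/2} for every i; that is, sup_{θ∈ℝ^p} f(θ) = max over θ ∈ μ + {π/2, 3π/2}^p of f(θ). -/
open Real Finset Function

private def bil {p : ℕ} (Λ : Matrix (Fin p) (Fin p) ℝ) (u : Fin p → ℝ) : ℝ :=
  ∑ i, ∑ j, u i * Λ i j * u j

private lemma bil_update_affine {p : ℕ} (Λ : Matrix (Fin p) (Fin p) ℝ) (a : Fin p)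
    (hd : Λ a a = 0) (s : Fin p → ℝ) (t : ℝ) :
    bil Λ (update s a t) = bil Λ (update s a 0)
      + t * ((∑ j, Λ a j * update s a 0 j) + ∑ i, update s a 0 i * Λ i a) := by
  set u := update s a 0 with hu
  set P : Fin p → ℝ := Pi.single a t with hP
  have hsplit : update s a t = fun i => u i + P i := by
    funext i
    by_cases h : i = a
    · subst h; simp [hu, hP]
    · simp [hu, hP, update_of_ne h, Pi.single_eq_of_ne h]
  rw [hsplit]
  unfold bil
  have expand : ∀ i j : Fin p,
      (u i + P i) * Λ i j * (u j + P j)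
      = u i * Λ i j * u j + u i * Λ i j * P j
        + P i * Λ i j * u j + P i * Λ i j * P j := by
    intro i j; ring
  simp only [expand, Finset.sum_add_distrib]
  have h1 : ∀ i : Fin p, ∑ j, u i * Λ i j * P j = u i * Λ i a * t := by
    intro i
    rw [Fintype.sum_eq_single a]
    · simp [hP]
    · intro b hb; simp [hP, Pi.single_eq_of_ne hb]
  have h2 : ∑ i, ∑ j, P i * Λ i j * u j = t * ∑ j, Λ a j * u j := by
    rw [Fintype.sum_eq_single a]
    · rw [Finset.mul_sum]; congr 1; funext j; simp [hP]; ring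
    · intro b hb; simp [hP, Pi.single_eq_of_ne hb]
  have h3 : ∑ i, ∑ j, P i * Λ i j * P j = 0 := by
    rw [Fintype.sum_eq_single a]
    · rw [Fintype.sum_eq_single a]
      · simp [hP, hd]
      · intro b hb; simp [hP, Pi.single_eq_of_ne hb]
    · intro b hb; simp [hP, Pi.single_eq_of_ne hb]
  simp only [h1, h2, h3]
  rw [← Finset.sum_mul]
  ring

private lemma bil_update_le {p : ℕ} (Λ : Matrix (Fin p) (Fin p) ℝ) (a : Fin p)
    (hd : Λ a a = 0) (s : Fin p → ℝ) (t : ℝ) (ht : |t| ≤ 1) :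
    bil Λ (update s a t) ≤
      max (bil Λ (update s a 1)) (bil Λ (update s a (-1))) := by
  rw [bil_update_affine Λ a hd s t, bil_update_affine Λ a hd s 1,
    bil_update_affine Λ a hd s (-1)]
  set E := (∑ j, Λ a j * update s a 0 j) + ∑ i, update s a 0 i * Λ i a with hE
  have htE : t * E ≤ |E| := by
    calc t * E ≤ |t * E| := le_abs_self _
    _ = |t| * |E| := abs_mul t E
    _ ≤ 1 * |E| := mul_le_mul_of_nonneg_right ht (abs_nonneg E)
    _ = |E| := one_mul _
  rcases abs_cases E with ⟨h, _⟩ | ⟨h, _⟩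
  · apply le_max_of_le_left; nlinarith
  · apply le_max_of_le_right; nlinarith

private lemma bil_le_vertex {p : ℕ} (Λ : Matrix (Fin p) (Fin p) ℝ)
    (hd : ∀ i, Λ i i = 0) (T : Finset (Fin p)) :
    ∀ s : Fin p → ℝ, (∀ i, |s i| ≤ 1) → (∀ i ∉ T, s i = 1 ∨ s i = -1) →
      ∃ σ : Fin p → Bool, bil Λ s ≤ bil Λ (fun i => if σ i then 1 else -1) := by
  induction T using Finset.induction with
  | empty =>
    intro s _ hext
    refine ⟨fun i => decide (s i = 1), le_of_eq ?_⟩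
    congr 1
    funext i
    rcases hext i (Finset.notMem_empty i) with h | h
    · simp [h]
    · have : s i ≠ 1 := by rw [h]; norm_num
      simp only [h, this, if_false]
      norm_num
  | @insert a T ha ih =>
    intro s hb hext
    have key : ∀ t : ℝ, (t = 1 ∨ t = -1) →
        ∃ σ : Fin p → Bool, bil Λ (update s a t) ≤ bil Λ (fun i => if σ i then 1 else -1) := by
      intro t ht
      apply ih
      · intro i
        by_cases h : i = a
        · subst h; rcases ht with h | h <;> simp [h]
        · rw [update_of_ne h]; exact hb i
      · intro i hi
        by_cases h : i = a
        · subst h; simpa using ht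
        · rw [update_of_ne h]
          exact hext i (by simp [h, hi])
    obtain ⟨σ₁, hσ₁⟩ := key 1 (Or.inl rfl)
    obtain ⟨σ₂, hσ₂⟩ := key (-1) (Or.inr rfl)
    have hs : s = update s a (s a) := (update_eq_self a s).symm
    have := bil_update_le Λ a (hd a) s (s a) (hb a)
    rw [← hs] at this
    rcases max_cases (bil Λ (update s a 1)) (bil Λ (update s a (-1))) with ⟨he, _⟩ | ⟨he, _⟩
    · exact ⟨σ₁, by rw [he] at this; linarith⟩
    · exact ⟨σ₂, by rw [he] at this; linarith⟩

/-- For `κ = 0`, the supremum of `f` over `ℝ^p` is attained at some point all of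
whose coordinates satisfy `θᵢ - μᵢ ∈ {π/2, 3π/2}`; that is, `sup f` equals the
maximum of `f` over the finite set `μ + {π/2, 3π/2}^p`. -/
theorem stmt_9 (p : ℕ) (hp : 1 ≤ p) (μ : Fin p → ℝ)
    (Λ : Matrix (Fin p) (Fin p) ℝ) (hΛsym : Λ.IsSymm)
    (hΛdiag : ∀ i, Λ i i = 0)
    (f : (Fin p → ℝ) → ℝ)
    (hf : ∀ θ, f θ =
        (1 / 2) * ∑ i, ∑ j, Real.sin (θ i - μ i) * Λ i j * Real.sin (θ j - μ j)) :
    ∃ θ₀ : Fin p → ℝ,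
      (∀ i, θ₀ i - μ i = π / 2 ∨ θ₀ i - μ i = 3 * π / 2) ∧
      ∀ θ, f θ ≤ f θ₀ := by
  -- pick a maximizing sign vector
  obtain ⟨σ₀, -, hσ₀⟩ := Finset.exists_max_image (Finset.univ : Finset (Fin p → Bool))
    (fun σ => bil Λ (fun i => if σ i then 1 else -1)) ⟨fun _ => true, Finset.mem_univ _⟩
  set θ₀ : Fin p → ℝ := fun i => μ i + if σ₀ i then π / 2 else 3 * π / 2 with hθ₀
  have hsin32 : Real.sin (3 * π / 2) = -1 := by
    have : (3 : ℝ) * π / 2 = π / 2 + π := by ring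
    rw [this, Real.sin_add_pi, Real.sin_pi_div_two]
  have hsθ₀ : ∀ i, Real.sin (θ₀ i - μ i) = if σ₀ i then (1:ℝ) else -1 := by
    intro i
    by_cases h : σ₀ i <;> simp [hθ₀, h, hsin32]
  refine ⟨θ₀, fun i => ?_, fun θ => ?_⟩
  · by_cases h : σ₀ i <;> simp [hθ₀, h]
  · rw [hf θ, hf θ₀]
    have hfθ₀ : ∑ i, ∑ j, Real.sin (θ₀ i - μ i) * Λ i j * Real.sin (θ₀ j - μ j)
        = bil Λ (fun i => if σ₀ i then 1 else -1) := by
      unfold bil; simp only [hsθ₀]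
    rw [hfθ₀]
    have hL : (∑ i, ∑ j, Real.sin (θ i - μ i) * Λ i j * Real.sin (θ j - μ j))
        = bil Λ (fun i => Real.sin (θ i - μ i)) := by simp only [bil]
    rw [hL]
    obtain ⟨σ, hσ⟩ := bil_le_vertex Λ hΛdiag Finset.univ
      (fun i => Real.sin (θ i - μ i)) (fun i => abs_le.mpr ⟨Real.neg_one_le_sin _, Real.sin_le_one _⟩)
      (fun i hi => absurd (Finset.mem_univ i) hi)
    have h2 : bil Λ (fun i => Real.sin (θ i - μ i))
        ≤ bil Λ (fun i => if σ₀ i then 1 else -1) :=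
      le_trans hσ (hσ₀ σ (Finset.mem_univ σ))
    linarith
end

section
/- For κ = 0 and Λ ≠ 0, the supremum of f over ℝ^p is strictly positive: sup_{θ∈ℝ^p} f(θ) > 0. (Taking s(θ) proportional to an eigenvector of Λ with positive eigenvalue λ and ‖·‖_∞ ≤ 1 gives f(θ) = (λ/2)‖s(θ)‖² > 0.) -/
open Real

/-- For `κ = 0` and `Λ ≠ 0`, the supremum of `f` over `ℝ^p` is strictly
positive: there is a point `θ` with `f(θ) > 0`. -/
theorem stmt_13 (p : ℕ) (hp : 1 ≤ p) (μ : Fin p → ℝ)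
    (Λ : Matrix (Fin p) (Fin p) ℝ) (hΛsym : Λ.IsSymm)
    (hΛdiag : ∀ i, Λ i i = 0) (hΛne : Λ ≠ 0)
    (f : (Fin p → ℝ) → ℝ)
    (hf : ∀ θ, f θ =
        (1 / 2) * ∑ i, ∑ j, Real.sin (θ i - μ i) * Λ i j * Real.sin (θ j - μ j)) :
    ∃ θ : Fin p → ℝ, 0 < f θ := by
  have hex : ∃ i j, Λ i j ≠ 0 := by
    by_contra h
    push_neg at h
    exact hΛne (by ext i j; exact h i j)
  obtain ⟨i, j, hij⟩ := hex
  have hne : i ≠ j := by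
    rintro rfl
    exact hij (hΛdiag i)
  set c : ℝ := if 0 < Λ i j then 1 else -1 with hc
  set θ : Fin p → ℝ := fun k =>
    if k = i then μ i + π / 2 else if k = j then μ j + c * (π / 2) else μ k with hθ
  refine ⟨θ, ?_⟩
  set s : Fin p → ℝ := fun k => Real.sin (θ k - μ k) with hs
  have hsi : s i = 1 := by
    simp [hs, hθ]
  have hsj : s j = c := by
    simp only [hs, hθ, if_neg (Ne.symm hne), if_pos rfl, if_true, eq_self_iff_true]
    have : μ j + c * (π / 2) - μ j = c * (π / 2) := by ring
    rw [this]
    rcases eq_or_ne c 1 with h1 | h1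
    · rw [h1]; simp
    · have : c = -1 := by
        rcases (by by_cases h : 0 < Λ i j <;> simp [hc, h] : c = 1 ∨ c = -1) with h | h
        · exact absurd h h1
        · exact h
      rw [this]; simp
  have hs0 : ∀ k, k ≠ i → k ≠ j → s k = 0 := by
    intro k hki hkj
    simp [hs, hθ, hki, hkj]
  have hinner : ∀ a, (∑ b, s a * Λ a b * s b) = s a * Λ a i + s a * Λ a j * c := by
    intro a
    have hsub : ({i, j} : Finset (Fin p)) ⊆ Finset.univ := Finset.subset_univ _
    rw [← Finset.sum_subset hsub (by
      intro b _ hb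
      simp only [Finset.mem_insert, Finset.mem_singleton, not_or] at hb
      rw [hs0 b hb.1 hb.2]; ring)]
    rw [Finset.sum_pair hne, hsi, hsj]
    ring
  have hsum : (∑ a, ∑ b, s a * Λ a b * s b) = 2 * (Λ i j * c) := by
    have hsub : ({i, j} : Finset (Fin p)) ⊆ Finset.univ := Finset.subset_univ _
    rw [← Finset.sum_subset hsub (by
      intro a _ ha
      simp only [Finset.mem_insert, Finset.mem_singleton, not_or] at ha
      rw [hinner a, hs0 a ha.1 ha.2]; ring)]
    rw [Finset.sum_pair hne, hinner i, hinner j, hsi, hsj, hΛdiag i, hΛdiag j]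
    have hji : Λ j i = Λ i j := hΛsym.apply i j
    rw [hji]
    ring
  have hfθ : f θ = Λ i j * c := by
    rw [hf θ]
    have : (∑ a, ∑ b, Real.sin (θ a - μ a) * Λ a b * Real.sin (θ b - μ b))
        = ∑ a, ∑ b, s a * Λ a b * s b := rfl
    rw [this, hsum]
    ring
  rw [hfθ]
  by_cases h : 0 < Λ i j
  · simp only [hc, if_pos h]
    linarith
  · simp only [hc, if_neg h]
    have : Λ i j < 0 := lt_of_le_of_ne (not_lt.mp h) hij
    nlinarith
end

section
/- For κ = 0 and Λ ≠ 0, every global maximum θ of f satisfies ‖s(θ)‖_∞ = 1, i.e. max_{1≤i≤p} |sin(θ_i − μ_i)| = 1. (If f(θ) > 0 and ‖s(θ)‖_∞ < 1, rescaling s(θ) by c = 1/‖s(θ)‖_∞ > 1 yields a point θ̃ with f(θ̃) = c² f(θ) > f(θ).) -/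
open Real

lemma sum_two_support {p : ℕ} (i0 j0 : Fin p) (hij : i0 ≠ j0)
    (g : Fin p → ℝ) (hg : ∀ k, k ≠ i0 → k ≠ j0 → g k = 0) :
    ∑ k, g k = g i0 + g j0 := by
  rw [← Finset.sum_pair hij]
  refine (Finset.sum_subset (Finset.subset_univ _) ?_).symm
  intro k _ hk
  simp only [Finset.mem_insert, Finset.mem_singleton, not_or] at hk
  exact hg k hk.1 hk.2

/-- Lemma 2: for `κ = 0` and `Λ ≠ 0`, every global maximum `θ` of `f` satisfies
`‖s(θ)‖_∞ = 1`, i.e. `|sin(θᵢ - μᵢ)| = 1` for some index `i`. -/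
theorem stmt_14 (p : ℕ) (hp : 1 ≤ p) (μ : Fin p → ℝ)
    (Λ : Matrix (Fin p) (Fin p) ℝ) (hΛsym : Λ.IsSymm)
    (hΛdiag : ∀ i, Λ i i = 0) (hΛne : Λ ≠ 0)
    (f : (Fin p → ℝ) → ℝ)
    (hf : ∀ θ, f θ =
        (1 / 2) * ∑ i, ∑ j, Real.sin (θ i - μ i) * Λ i j * Real.sin (θ j - μ j))
    (θstar : Fin p → ℝ) (hmax : ∀ θ, f θ ≤ f θstar) :
    ∃ i, |Real.sin (θstar i - μ i)| = 1 := by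
  by_contra hcon
  push_neg at hcon
  set s : Fin p → ℝ := fun i => Real.sin (θstar i - μ i) with hs
  have hslt : ∀ i, |s i| < 1 := by
    intro i
    exact lt_of_le_of_ne (abs_le.mpr ⟨Real.neg_one_le_sin _, Real.sin_le_one _⟩) (hcon i)
  -- find an off-diagonal nonzero entry
  obtain ⟨i0, j0, hΛij⟩ : ∃ i j, Λ i j ≠ 0 := by
    by_contra h
    push_neg at h
    exact hΛne (Matrix.ext fun i j => h i j)
  have hij : i0 ≠ j0 := fun h => hΛij (h ▸ hΛdiag i0)
  -- construct θ0 with f θ0 = |Λ i0 j0| > 0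
  set ε : ℝ := if 0 < Λ i0 j0 then 1 else -1 with hε
  have hεΛ : Λ i0 j0 * ε = |Λ i0 j0| := by
    rcases lt_trichotomy (Λ i0 j0) 0 with h | h | h
    · rw [hε, if_neg (by linarith), abs_of_neg h]; ring
    · exact absurd h hΛij
    · rw [hε, if_pos h, abs_of_pos h]; ring
  set θ0 : Fin p → ℝ := fun k =>
    μ k + (if k = i0 then π/2 else if k = j0 then ε * (π/2) else 0) with hθ0
  set t : Fin p → ℝ := fun k => Real.sin (θ0 k - μ k) with ht
  have hti0 : t i0 = 1 := by
    show Real.sin (θ0 i0 - μ i0) = 1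
    simp [hθ0]
  have htj0 : t j0 = ε := by
    simp only [ht, hθ0, if_neg (Ne.symm hij), if_pos rfl, add_sub_cancel_left]
    rcases lt_or_ge 0 (Λ i0 j0) with h | h
    · rw [hε, if_pos h]; simpa using Real.sin_pi_div_two
    · rw [hε, if_neg (not_lt.mpr h)]
      simpa using Real.sin_pi_div_two
  have htk : ∀ k, k ≠ i0 → k ≠ j0 → t k = 0 := by
    intro k h1 h2
    simp [ht, hθ0, if_neg h1, if_neg h2]
  have hsymm : Λ j0 i0 = Λ i0 j0 := by
    have := hΛsym.apply i0 j0
    simpa using this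
  have hfθ0 : f θ0 = |Λ i0 j0| := by
    rw [hf]
    have houter : ∑ i, ∑ j, t i * Λ i j * t j =
        (∑ j, t i0 * Λ i0 j * t j) + (∑ j, t j0 * Λ j0 j * t j) := by
      apply sum_two_support i0 j0 hij
      intro k h1 h2
      simp [htk k h1 h2]
    have hinner1 : ∑ j, t i0 * Λ i0 j * t j =
        t i0 * Λ i0 i0 * t i0 + t i0 * Λ i0 j0 * t j0 := by
      apply sum_two_support i0 j0 hij
      intro k h1 h2
      simp [htk k h1 h2]
    have hinner2 : ∑ j, t j0 * Λ j0 j * t j =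
        t j0 * Λ j0 i0 * t i0 + t j0 * Λ j0 j0 * t j0 := by
      apply sum_two_support i0 j0 hij
      intro k h1 h2
      simp [htk k h1 h2]
    show (1/2 : ℝ) * ∑ i, ∑ j, t i * Λ i j * t j = _
    rw [houter, hinner1, hinner2, hti0, htj0, hΛdiag i0, hΛdiag j0, hsymm, ← hεΛ]
    ring
  have hpos : 0 < f θstar := lt_of_lt_of_le (hfθ0 ▸ abs_pos.mpr hΛij) (hmax θ0)
  -- the sup of |s i|
  haveI : Nonempty (Fin p) := ⟨⟨0, hp⟩⟩
  have hne : (Finset.univ : Finset (Fin p)).Nonempty := Finset.univ_nonempty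
  set m : ℝ := Finset.univ.sup' hne (fun i => |s i|) with hm
  have hle : ∀ i, |s i| ≤ m := fun i => Finset.le_sup' (fun i => |s i|) (Finset.mem_univ i)
  have hmlt : m < 1 := by
    rw [hm, Finset.sup'_lt_iff]
    intro i _
    exact hslt i
  obtain ⟨i1, _, hi1⟩ := Finset.exists_mem_eq_sup' hne (fun i => |s i|)
  have hm0 : 0 ≤ m := by rw [hm, hi1]; exact abs_nonneg _
  rcases eq_or_lt_of_le hm0 with hm0' | hm0'
  · -- m = 0 : all s i = 0, f θstar = 0, contradiction with hpos
    have hz : ∀ i, s i = 0 := by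
      intro i
      have := hle i
      rw [← hm0'] at this
      exact abs_eq_zero.mp (le_antisymm this (abs_nonneg _))
    have : f θstar = 0 := by
      rw [hf]
      have : ∀ i : Fin p, ∑ j, s i * Λ i j * s j = 0 := by
        intro i; simp [hz i]
      simp [show (fun i => ∑ j, Real.sin (θstar i - μ i) * Λ i j *
        Real.sin (θstar j - μ j)) = fun i => ∑ j, s i * Λ i j * s j from rfl, this]
    linarith
  · -- m > 0 : rescale
    set θ1 : Fin p → ℝ := fun k => μ k + Real.arcsin (m⁻¹ * s k) with hθ1
    have habs : ∀ k, |m⁻¹ * s k| ≤ 1 := by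
      intro k
      rw [abs_mul, abs_of_pos (inv_pos.mpr hm0')]
      calc m⁻¹ * |s k| ≤ m⁻¹ * m := by
            apply mul_le_mul_of_nonneg_left (hle k) (le_of_lt (inv_pos.mpr hm0'))
        _ = 1 := inv_mul_cancel₀ (ne_of_gt hm0')
    have hsin1 : ∀ k, Real.sin (θ1 k - μ k) = m⁻¹ * s k := by
      intro k
      have h := abs_le.mp (habs k)
      simp only [hθ1, add_sub_cancel_left]
      exact Real.sin_arcsin h.1 h.2
    have hfθ1 : f θ1 = m⁻¹ * m⁻¹ * f θstar := by
      rw [hf, hf]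
      have : ∀ i j : Fin p, Real.sin (θ1 i - μ i) * Λ i j * Real.sin (θ1 j - μ j)
          = m⁻¹ * m⁻¹ * (s i * Λ i j * s j) := by
        intro i j
        rw [hsin1 i, hsin1 j]; ring
      simp_rw [this]
      have hsum : ∑ i : Fin p, ∑ j : Fin p, m⁻¹ * m⁻¹ * (s i * Λ i j * s j)
          = m⁻¹ * m⁻¹ * ∑ i : Fin p, ∑ j : Fin p, s i * Λ i j * s j := by
        rw [Finset.mul_sum]
        exact Finset.sum_congr rfl fun i _ => by rw [Finset.mul_sum]
      rw [hsum]
      show (1/2 : ℝ) * (m⁻¹ * m⁻¹ * ∑ i : Fin p, ∑ j : Fin p, s i * Λ i j * s j)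
          = m⁻¹ * m⁻¹ * ((1/2 : ℝ) * ∑ i : Fin p, ∑ j : Fin p, s i * Λ i j * s j)
      ring
    have hgt : f θstar < f θ1 := by
      rw [hfθ1]
      have h1 : 1 < m⁻¹ := (one_lt_inv₀ hm0').mpr hmlt
      have h2 : 1 < m⁻¹ * m⁻¹ := by nlinarith
      calc f θstar = 1 * f θstar := (one_mul _).symm
        _ < m⁻¹ * m⁻¹ * f θstar := mul_lt_mul_of_pos_right h2 hpos
    exact absurd (hmax θ1) (not_le.mpr hgt)
end

section
/- For κ = (3,3,3) and Λ = [[0,−2,2],[−2,0,2],[2,2,0]], the matrix P = diag(3,3,3) − Λ is positive definite (its eigenvalues are 1, 1, 7), but the matrix diag(3,3,3) + Λ is not positive semidefinite (its eigenvalues are −1, 5, 5). Consequently the hypothesis of the proposition on positive definiteness of P can hold while the Hessian of f at θ = (μ₁+π, μ₂+π, μ₃+π), which equals diag(κ) + Λ, is not positive semidefinite, so the minimum of the MVM density need not be at (μ₁+π, …, μ_p+π) under that hypothesis alone. -/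
/-! With `v = (1, 1, -1)` one has `diag κ - Λ = 1 + 2 v vᵀ` and `diag κ + Λ = 5 - 2 v vᵀ`.
The first is the identity plus a positive semidefinite rank-one term, hence positive definite;
the quadratic form of the second at `v` is `5 ‖v‖² - 2 ‖v‖⁴ = 15 - 18 < 0`. -/

namespace Matrix

variable {n : Type*} [Fintype n] [DecidableEq n]

lemma posDef_one_add_smul_vecMulVec_self (v : n → ℝ) {c : ℝ} (hc : 0 ≤ c) :
    (1 + c • vecMulVec v v).PosDef := by
  simpa using PosDef.one.add_posSemidef ((posSemidef_vecMulVec_self_star v).smul hc)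

lemma dotProduct_smul_one_sub_smul_vecMulVec_self_mulVec (v : n → ℝ) (a b : ℝ) :
    v ⬝ᵥ ((a • 1 - b • vecMulVec v v) *ᵥ v) = a * (v ⬝ᵥ v) - b * (v ⬝ᵥ v) ^ 2 := by
  simp only [sub_mulVec, smul_mulVec, one_mulVec, vecMulVec_mulVec, dotProduct_sub,
    dotProduct_smul, smul_eq_mul, op_smul_eq_mul]
  ring

lemma not_posSemidef_smul_one_sub_smul_vecMulVec_self {v : n → ℝ} (hv : v ≠ 0) {a b : ℝ}
    (hab : a < b * (v ⬝ᵥ v)) : ¬ (a • 1 - b • vecMulVec v v).PosSemidef := by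
  intro hpsd
  have hvv : 0 < v ⬝ᵥ v := by simpa using dotProduct_star_self_pos_iff.mpr hv
  have hneg : v ⬝ᵥ ((a • 1 - b • vecMulVec v v) *ᵥ v) < 0 := by
    rw [dotProduct_smul_one_sub_smul_vecMulVec_self_mulVec]
    nlinarith
  simpa using (hneg.trans_le (hpsd.dotProduct_mulVec_nonneg v)).false

end Matrix

/-- Counterexample: for `κ = (3,3,3)` and `Λ = [[0,-2,2],[-2,0,2],[2,2,0]]`,
the matrix `P = diag κ - Λ` is positive definite, but `diag κ + Λ` — which is the
Hessian of `f` at `θ = μ + (π, π, π)` — is not positive semidefinite.  Hence under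
the positive-definiteness hypothesis alone, the minimum of the MVM density need
not be at `μ + (π, …, π)`. -/
theorem stmt_15 (κ : Fin 3 → ℝ) (hκ : κ = ![3, 3, 3])
    (Λ : Matrix (Fin 3) (Fin 3) ℝ)
    (hΛ : Λ = !![0, -2, 2; -2, 0, 2; 2, 2, 0]) :
    (Matrix.diagonal κ - Λ).PosDef ∧ ¬ (Matrix.diagonal κ + Λ).PosSemidef := by
  subst hκ hΛ
  set v : Fin 3 → ℝ := ![1, 1, -1]
  have hP : Matrix.diagonal ![3, 3, 3] - !![0, -2, 2; -2, 0, 2; 2, 2, 0] =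
      1 + (2 : ℝ) • Matrix.vecMulVec v v := by
    ext i j; fin_cases i <;> fin_cases j <;> norm_num [v, Matrix.vecMulVec]
  have hQ : Matrix.diagonal ![3, 3, 3] + !![0, -2, 2; -2, 0, 2; 2, 2, 0] =
      (5 : ℝ) • 1 - (2 : ℝ) • Matrix.vecMulVec v v := by
    ext i j; fin_cases i <;> fin_cases j <;> norm_num [v, Matrix.vecMulVec]
  have hv : v ≠ 0 := fun h => by simpa [v] using congrFun h 0
  have hvv : v ⬝ᵥ v = 3 := by simp [v, dotProduct, Fin.sum_univ_three]; norm_num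
  rw [hP, hQ]
  exact ⟨Matrix.posDef_one_add_smul_vecMulVec_self v zero_le_two,
    Matrix.not_posSemidef_smul_one_sub_smul_vecMulVec_self hv (by rw [hvv]; norm_num)⟩
end

section
/- Let η ∈ (0, π/2), ε = sin(η), μ = 0, κ = (ε, ε, ε), and Λ = [[0,−1,1],[−1,0,1],[1,1,0]]. Then the six points θ¹ = (0, 3π/2+η, 3π/2+η), θ² = (π/2−η, 3π/2+η, 0), θ³ = (π/2−η, 0, π/2−η), θ⁴ = (0, π/2−η, π/2−η), θ⁵ = (3π/2+η, π/2−η, 0), θ⁶ = (3π/2+η, 0, 3π/2+η) are all critical points of f, i.e. ∂_i f(θ^ℓ) = 0 for i = 1,2,3 and ℓ = 1,…,6. -/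
open Real

/-- Example 3: for `η ∈ (0, π/2)`, `ε = sin η`, `μ = 0`, `κ = (ε,ε,ε)` and
`Λ = [[0,-1,1],[-1,0,1],[1,1,0]]`, the six listed points are critical points of
`f`, i.e. all partial derivatives `∂ᵢf(θ) = -κᵢ sin θᵢ + cos θᵢ Σₖ λᵢₖ sin θₖ`
vanish there. -/
theorem stmt_16 (η : ℝ) (hη : 0 < η) (hη' : η < π / 2)
    (ε : ℝ) (hε : ε = Real.sin η)
    (Λ : Matrix (Fin 3) (Fin 3) ℝ)
    (hΛ : Λ = !![0, -1, 1; -1, 0, 1; 1, 1, 0]) :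
    ∀ θ ∈ ({![0, 3 * π / 2 + η, 3 * π / 2 + η],
            ![π / 2 - η, 3 * π / 2 + η, 0],
            ![π / 2 - η, 0, π / 2 - η],
            ![0, π / 2 - η, π / 2 - η],
            ![3 * π / 2 + η, π / 2 - η, 0],
            ![3 * π / 2 + η, 0, 3 * π / 2 + η]} : Set (Fin 3 → ℝ)),
      ∀ i : Fin 3,
        -ε * Real.sin (θ i) + Real.cos (θ i) * ∑ k, Λ i k * Real.sin (θ k) = 0 := by
  subst hε hΛ
  have key : 3 * π / 2 + η = π + (π / 2 + η) := by ring
  have hs : Real.sin (3 * π / 2 + η) = -Real.cos η := by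
    rw [key]; simp [Real.sin_add, Real.cos_add]
  have hc : Real.cos (3 * π / 2 + η) = Real.sin η := by
    rw [key]; simp [Real.sin_add, Real.cos_add]
  intro θ hθ
  simp only [Set.mem_insert_iff, Set.mem_singleton_iff] at hθ
  rcases hθ with rfl | rfl | rfl | rfl | rfl | rfl <;>
    intro i <;> fin_cases i <;>
    simp [Fin.sum_univ_three, hs, hc, Real.sin_pi_div_two_sub, Real.cos_pi_div_two_sub] <;>
    ring
end

section
/- There exists ε₀ > 0 such that for every ε with 0 < ε < ε₀, the three symmetric matrices H₁ = [[−ε, −ε, ε], [−ε, −1, ε²], [ε, ε², −1]], H₂ = [[−1, −ε², ε], [−ε², −1, ε], [ε, ε, −ε]], and H₃ = [[−1, −ε, ε²], [−ε, −ε, ε], [ε², ε, −1]] are all negative definite. Consequently, for η > 0 small enough (with ε = sin η), the six critical points θ¹, …, θ⁶ of f from the preceding construction—whose Hessians are H₁, H₂, H₃, H₁, H₂, H₃ respectively—are isolated local maxima, so the MVM(0, (ε,ε,ε), Λ) distribution with Λ = [[0,−1,1],[−1,0,1],[1,1,0]] has at least six isolated modes. -/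
/-!
The negated Hessians factor as `Lᵀ D L` with `D = diag(ε, 1 - ε, (1 - ε)(1 - ε²))`; since `H₂` and
`H₃` are `H₁` up to a signed permutation of the coordinates, the same `D` serves for all three.

The modes are handled without a second-derivative test. Around each mode there are angular
coordinates `(x, Y, Z)`, each `±θᵢ` up to a shift, in which `f η` becomes `localExponent η x Y Z`
and the mode sits at `(0, η, η)`. Writing `ε = sin η` and `a, b, c` for the sines of half the
deviations of `x, Y, Z`, the drop `localExponent η 0 η η - localExponent η x Y Z` is
`2ε a² + ((sin Y - ε)² + (sin Z - ε)² + (cos Y - cos Z)²) / 2 - sin x (cos Y - cos Z)`, and for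
deviations below `ε ≤ 1/40` the squares dominate the cross term, leaving at least `ε a² + b² + c²`.
-/

open Real

namespace Matrix

theorem posDef_transpose_mul_diagonal_mul {n : Type*} [Fintype n] [DecidableEq n]
    {L : Matrix n n ℝ} {d : n → ℝ} (hd : ∀ i, 0 < d i) (hL : L.det ≠ 0) :
    (Lᵀ * diagonal d * L).PosDef := by
  rw [← conjTranspose_eq_transpose_of_trivial]
  exact (posDef_diagonal_iff.mpr hd).conjTranspose_mul_mul_same
    (mulVec_injective_iff_isUnit.mpr ((isUnit_iff_isUnit_det L).mpr hL.isUnit))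

end Matrix

open Matrix in
theorem negHessians_posDef {ε : ℝ} (hε : 0 < ε) (hε1 : ε < 1) :
    (-!![-ε, -ε, ε; -ε, -1, ε ^ 2; ε, ε ^ 2, -1]).PosDef ∧
    (-!![-1, -(ε ^ 2), ε; -(ε ^ 2), -1, ε; ε, ε, -ε]).PosDef ∧
    (-!![-1, -ε, ε ^ 2; -ε, -ε, ε; ε ^ 2, ε, -1]).PosDef := by
  have hd : ∀ i, 0 < ![ε, 1 - ε, (1 - ε) * (1 - ε ^ 2)] i := by
    intro i
    fin_cases i
    · exact hε
    · exact sub_pos.2 hε1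
    · exact mul_pos (sub_pos.2 hε1) (by nlinarith)
  refine ⟨?_, ?_, ?_⟩
  · convert posDef_transpose_mul_diagonal_mul (L := !![1, 1, -1; 0, 1, ε; 0, 0, 1]) hd
      (by simp [det_fin_three]) using 1
    ext i j; fin_cases i <;> fin_cases j <;> simp [mul_apply, Fin.sum_univ_three] <;> ring
  · convert posDef_transpose_mul_diagonal_mul (L := !![-1, -1, 1; -1, ε, 0; 0, 1, 0]) hd
      (by simp [det_fin_three]) using 1
    ext i j; fin_cases i <;> fin_cases j <;> simp [mul_apply, Fin.sum_univ_three] <;> ring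
  · convert posDef_transpose_mul_diagonal_mul (L := !![1, 1, -1; 1, 0, ε; 0, 0, 1]) hd
      (by simp [det_fin_three]) using 1
    ext i j; fin_cases i <;> fin_cases j <;> simp [mul_apply, Fin.sum_univ_three] <;> ring

namespace Real

theorem abs_sin_add_le (a w : ℝ) : |sin (a + w)| ≤ |sin a| + |w| := by
  rw [sin_add]
  refine (abs_add_le _ _).trans (add_le_add ?_ ?_) <;> rw [abs_mul]
  · exact mul_le_of_le_one_right (abs_nonneg _) (abs_cos_le_one w)
  · exact (mul_le_of_le_one_left (abs_nonneg _) (abs_cos_le_one a)).trans abs_sin_le_abs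

theorem abs_sin_sub_le (u v : ℝ) : |sin (u - v)| ≤ |sin u| + |sin v| := by
  rw [sin_sub]
  refine (abs_sub _ _).trans (add_le_add ?_ ?_) <;> rw [abs_mul]
  · exact mul_le_of_le_one_right (abs_nonneg _) (abs_cos_le_one v)
  · exact mul_le_of_le_one_left (abs_nonneg _) (abs_cos_le_one u)

theorem abs_sin_add_le_two_mul_sin {η w : ℝ} (hw : |w| ≤ sin η) : |sin (η + w)| ≤ 2 * sin η := by
  have hη : 0 ≤ sin η := (abs_nonneg w).trans hw
  linarith [abs_sin_add_le η w, abs_of_nonneg hη]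

theorem sin_half_ne_zero {t : ℝ} (ht : t ≠ 0) (ht' : |t| < π) : sin (t / 2) ≠ 0 := by
  rw [abs_lt] at ht'
  rw [Ne, sin_eq_zero_iff_of_lt_of_lt (by linarith) (by linarith)]
  positivity

theorem sin_sub_three_pi_div_two (t : ℝ) : sin (t - 3 * π / 2) = cos t := by
  rw [show t - 3 * π / 2 = t + π / 2 - 2 * π by ring, sin_sub_two_pi, sin_add_pi_div_two]

theorem cos_sub_three_pi_div_two (t : ℝ) : cos (t - 3 * π / 2) = -sin t := by
  rw [show t - 3 * π / 2 = t + π / 2 - 2 * π by ring, cos_sub_two_pi, cos_add_pi_div_two]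

end Real

section LocalExponent

variable {η Y Z : ℝ}

theorem sq_sin_sub_sin_ge (hY : |Y - η| ≤ sin η) :
    4 * (1 - 4 * sin η ^ 2) * sin ((Y - η) / 2) ^ 2 ≤ (sin Y - sin η) ^ 2 := by
  have hs : |sin ((Y + η) / 2)| ≤ 2 * sin η := by
    rw [show (Y + η) / 2 = η + (Y - η) / 2 by ring]
    exact abs_sin_add_le_two_mul_sin (by rw [abs_div]; linarith [abs_nonneg (Y - η)])
  have hs2 : sin ((Y + η) / 2) ^ 2 ≤ 4 * sin η ^ 2 := by
    nlinarith [sq_abs (sin ((Y + η) / 2)), abs_nonneg (sin ((Y + η) / 2))]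
  rw [sin_sub_sin, mul_pow, mul_pow, cos_sq']
  nlinarith [sq_nonneg (sin ((Y - η) / 2))]

theorem abs_cos_sub_cos_le (hY : |Y - η| ≤ sin η) (hZ : |Z - η| ≤ sin η) :
    |cos Y - cos Z| ≤ 4 * sin η * (|sin ((Y - η) / 2)| + |sin ((Z - η) / 2)|) := by
  have hsum : |sin ((Y + Z) / 2)| ≤ 2 * sin η := by
    rw [show (Y + Z) / 2 = η + ((Y - η) + (Z - η)) / 2 by ring]
    refine abs_sin_add_le_two_mul_sin ?_
    rw [abs_div, abs_two]
    linarith [abs_add_le (Y - η) (Z - η)]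
  have hdiff : |sin ((Y - Z) / 2)| ≤ |sin ((Y - η) / 2)| + |sin ((Z - η) / 2)| := by
    rw [show (Y - Z) / 2 = (Y - η) / 2 - (Z - η) / 2 by ring]
    exact abs_sin_sub_le _ _
  rw [cos_sub_cos, abs_mul, abs_mul, abs_neg, abs_two]
  nlinarith [abs_nonneg (sin ((Y + Z) / 2)), abs_nonneg (sin ((Y - Z) / 2))]

noncomputable def localExponent (η x Y Z : ℝ) : ℝ :=
  sin η * (cos x + sin Y + sin Z) + sin x * (cos Y - cos Z) + cos Y * cos Z

theorem localExponent_gap (η x Y Z : ℝ) :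
    localExponent η 0 η η - localExponent η x Y Z =
      sin η * (1 - cos x) + ((sin Y - sin η) ^ 2 + (sin Z - sin η) ^ 2 + (cos Y - cos Z) ^ 2) / 2
        - sin x * (cos Y - cos Z) := by
  simp only [localExponent, sin_zero, cos_zero]
  linear_combination sin_sq_add_cos_sq η - sin_sq_add_cos_sq Y / 2 - sin_sq_add_cos_sq Z / 2

theorem localExponent_lt {x : ℝ} (hE : 0 < sin η) (hE' : sin η ≤ 1 / 40)
    (hx : |x| < sin η) (hY : |Y - η| < sin η) (hZ : |Z - η| < sin η)
    (hne : x ≠ 0 ∨ Y ≠ η ∨ Z ≠ η) :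
    localExponent η x Y Z < localExponent η 0 η η := by
  set E := sin η
  set a := sin (x / 2)
  set b := sin ((Y - η) / 2)
  set c := sin ((Z - η) / 2)
  have hπ : 1 / 40 < π := by linarith [pi_gt_three]
  have hcos : 1 - cos x = 2 * a ^ 2 := by
    have h := cos_two_mul (x / 2)
    rw [mul_div_cancel₀ x two_ne_zero, cos_sq'] at h
    linarith
  have hsin : |sin x| ≤ 2 * |a| := by
    have h := sin_two_mul (x / 2)
    rw [mul_div_cancel₀ x two_ne_zero] at h
    rw [h, abs_mul, abs_mul, abs_two]
    nlinarith [abs_cos_le_one (x / 2), abs_nonneg a]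
  have hcross : sin x * (cos Y - cos Z) ≤ E * a ^ 2 + 32 * E * (b ^ 2 + c ^ 2) := calc
    sin x * (cos Y - cos Z) ≤ |sin x| * |cos Y - cos Z| := (le_abs_self _).trans (abs_mul _ _).le
    _ ≤ 2 * |a| * (4 * E * (|b| + |c|)) :=
      mul_le_mul hsin (abs_cos_sub_cos_le hY.le hZ.le) (abs_nonneg _) (by positivity)
    _ ≤ E * a ^ 2 + 32 * E * (b ^ 2 + c ^ 2) := by
      nlinarith [mul_nonneg hE.le (sq_nonneg (|a| - 8 * |b|)),
        mul_nonneg hE.le (sq_nonneg (|a| - 8 * |c|)), sq_abs a, sq_abs b, sq_abs c]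
  have hpos : 0 < E * a ^ 2 + b ^ 2 + c ^ 2 := by
    rcases hne with h | h | h
    · have := sin_half_ne_zero h (by linarith)
      have : 0 < E * a ^ 2 := by positivity
      positivity
    · have := sin_half_ne_zero (sub_ne_zero.2 h) (by linarith)
      positivity
    · have := sin_half_ne_zero (sub_ne_zero.2 h) (by linarith)
      positivity
  have hb := sq_sin_sub_sin_ge hY.le
  have hc := sq_sin_sub_sin_ge hZ.le
  have gap := localExponent_gap η x Y Z
  nlinarith [sq_nonneg (cos Y - cos Z), mul_nonneg (mul_nonneg hE.le hE.le) (sq_nonneg b),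
    mul_nonneg (mul_nonneg hE.le hE.le) (sq_nonneg c), mul_nonneg hE.le (sq_nonneg b),
    mul_nonneg hE.le (sq_nonneg c)]

end LocalExponent

noncomputable def mvmExponent (η : ℝ) (θ : Fin 3 → ℝ) : ℝ :=
  sin η * (cos (θ 0) + cos (θ 1) + cos (θ 2))
    - sin (θ 0) * sin (θ 1) + sin (θ 0) * sin (θ 2) + sin (θ 1) * sin (θ 2)

def modes (η : ℝ) : Set (Fin 3 → ℝ) :=
  {![0, 3 * π / 2 + η, 3 * π / 2 + η], ![π / 2 - η, 3 * π / 2 + η, 0],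
    ![π / 2 - η, 0, π / 2 - η], ![0, π / 2 - η, π / 2 - η],
    ![3 * π / 2 + η, π / 2 - η, 0], ![3 * π / 2 + η, 0, 3 * π / 2 + η]}

theorem mvmExponent_lt_of_mem_modes {η : ℝ} (hE : 0 < sin η) (hE' : sin η ≤ 1 / 40)
    {θ : Fin 3 → ℝ} (hθ : θ ∈ modes η) {θ' : Fin 3 → ℝ} (hne : θ' ≠ θ)
    (hdist : dist θ' θ < sin η) : mvmExponent η θ' < mvmExponent η θ := by
  have hclose (i : Fin 3) : θ i - sin η < θ' i ∧ θ' i < θ i + sin η := by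
    have := (dist_pi_lt_iff hE).mp hdist i
    rw [Real.dist_eq, abs_sub_lt_iff] at this
    constructor <;> linarith
  suffices key : ∀ x Y Z : (Fin 3 → ℝ) → ℝ,
      (∀ φ, mvmExponent η φ = localExponent η (x φ) (Y φ) (Z φ)) →
      x θ = 0 → Y θ = η → Z θ = η →
      |x θ'| < sin η → |Y θ' - η| < sin η → |Z θ' - η| < sin η →
      (x θ' ≠ 0 ∨ Y θ' ≠ η ∨ Z θ' ≠ η) → mvmExponent η θ' < mvmExponent η θ by
    have h0 := hclose 0
    have h1 := hclose 1
    have h2 := hclose 2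
    simp only [modes, Set.mem_insert_iff, Set.mem_singleton_iff] at hθ
    rcases hθ with rfl | rfl | rfl | rfl | rfl | rfl <;>
      simp only [Matrix.cons_val_zero, Matrix.cons_val_one, Matrix.cons_val_two, Matrix.tail_cons,
        Matrix.head_cons] at h0 h1 h2 <;>
      [apply key (· 0) (· 1 - 3 * π / 2) (· 2 - 3 * π / 2);
       apply key (· 2) (π / 2 - · 0) (· 1 - 3 * π / 2);
       apply key (· 1) (π / 2 - · 2) (π / 2 - · 0);
       apply key (- · 0) (π / 2 - · 1) (π / 2 - · 2);
       apply key (· 2) (π / 2 - · 1) (· 0 - 3 * π / 2);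
       apply key (· 1) (· 0 - 3 * π / 2) (· 2 - 3 * π / 2)]
    all_goals first
      | intro φ
        simp only [mvmExponent, localExponent, sin_sub_three_pi_div_two, cos_sub_three_pi_div_two,
          sin_pi_div_two_sub, cos_pi_div_two_sub, sin_neg, cos_neg]
        ring
      | (simp; done)
      | (rw [abs_lt]; constructor <;> linarith)
      | (by_contra! h; exact hne (by ext i; fin_cases i <;> simp <;> linarith))
  intro x Y Z hchart hx0 hY0 hZ0 hx hY hZ hxYZ
  rw [hchart, hchart θ, hx0, hY0, hZ0]
  exact localExponent_lt hE hE' hx hY hZ hxYZ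

/-- For all small enough `ε > 0` the three Hessian matrices `H₁, H₂, H₃` are
negative definite; consequently, for small enough `η > 0` (with `ε = sin η`),
the six critical points of `f` (with `κ = (ε,ε,ε)` and
`Λ = [[0,-1,1],[-1,0,1],[1,1,0]]`) are isolated local maxima, so the
`MVM(0, (ε,ε,ε), Λ)` distribution has at least six isolated modes. -/
theorem stmt_17
    (H₁ H₂ H₃ : ℝ → Matrix (Fin 3) (Fin 3) ℝ)
    (hH₁ : ∀ ε, H₁ ε = !![-ε, -ε, ε; -ε, -1, ε ^ 2; ε, ε ^ 2, -1])
    (hH₂ : ∀ ε, H₂ ε = !![-1, -(ε ^ 2), ε; -(ε ^ 2), -1, ε; ε, ε, -ε])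
    (hH₃ : ∀ ε, H₃ ε = !![-1, -ε, ε ^ 2; -ε, -ε, ε; ε ^ 2, ε, -1])
    (Λ : Matrix (Fin 3) (Fin 3) ℝ)
    (hΛ : Λ = !![0, -1, 1; -1, 0, 1; 1, 1, 0])
    (f : ℝ → (Fin 3 → ℝ) → ℝ)
    (hf : ∀ η θ, f η θ = ∑ i, Real.sin η * Real.cos (θ i)
        + (1 / 2) * ∑ i, ∑ j, Real.sin (θ i) * Λ i j * Real.sin (θ j)) :
    (∃ ε₀ > (0 : ℝ), ∀ ε : ℝ, 0 < ε → ε < ε₀ →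
      (-(H₁ ε)).PosDef ∧ (-(H₂ ε)).PosDef ∧ (-(H₃ ε)).PosDef) ∧
    (∃ η₀ > (0 : ℝ), ∀ η : ℝ, 0 < η → η < η₀ →
      ∀ θ ∈ ({![0, 3 * π / 2 + η, 3 * π / 2 + η],
              ![π / 2 - η, 3 * π / 2 + η, 0],
              ![π / 2 - η, 0, π / 2 - η],
              ![0, π / 2 - η, π / 2 - η],
              ![3 * π / 2 + η, π / 2 - η, 0],
              ![3 * π / 2 + η, 0, 3 * π / 2 + η]} : Set (Fin 3 → ℝ)),
        ∃ δ > (0 : ℝ), ∀ θ' : Fin 3 → ℝ,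
          θ' ≠ θ → dist θ' θ < δ → f η θ' < f η θ) := by
  have hf' : ∀ η θ, f η θ = mvmExponent η θ := by
    intro η θ
    rw [hf, hΛ]
    simp [Fin.sum_univ_three, mvmExponent]
    ring
  refine ⟨⟨1, one_pos, fun ε hε hε1 => ?_⟩, ⟨1 / 40, by norm_num, fun η hη hη' θ hθ => ?_⟩⟩
  · rw [hH₁, hH₂, hH₃]
    exact negHessians_posDef hε hε1
  · have hE : 0 < sin η := sin_pos_of_pos_of_lt_pi hη (by linarith [pi_gt_three])
    have hE' : sin η ≤ 1 / 40 := (sin_le hη.le).trans hη'.le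
    refine ⟨sin η, hE, fun θ' hne hdist => ?_⟩
    rw [hf', hf']
    exact mvmExponent_lt_of_mem_modes hE hE' hθ hne hdist
end

section
/- Assume P = diag(κ₁, …, κ_p) − Λ is positive definite with smallest eigenvalue λ_min > 0. Then for all θ ∈ ℝ^p, f(θ) = Σᵢ κ_i c_i(θ) + ½ s(θ)ᵀ Λ s(θ) ≤ Σᵢ κ_i − (λ_min/2) Σᵢ s_i(θ)². Consequently, exp(f(θ)) ≤ exp(−p λ_min/4 + Σᵢ κ_i) · exp((λ_min/4) Σᵢ cos(2(θ_i − μ_i))), which provides a valid rejection-sampling envelope of the MVM density by a product of doubled-angle one-dimensional von Mises densities. -/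
open Real

/-- Rejection-sampling envelope: if `P = diag κ - Λ` is positive definite with
smallest eigenvalue `λmin > 0` (so that `λmin ‖x‖² ≤ xᵀ P x` for all `x`), then
`f(θ) ≤ Σᵢ κᵢ - (λmin/2) Σᵢ sᵢ(θ)²` and consequently
`exp (f θ) ≤ exp (-p λmin / 4 + Σᵢ κᵢ) * exp ((λmin/4) Σᵢ cos (2(θᵢ - μᵢ)))`. -/
theorem stmt_18 (p : ℕ) (hp : 1 ≤ p) (μ κ : Fin p → ℝ)
    (hκ : ∀ i, 0 ≤ κ i)
    (Λ : Matrix (Fin p) (Fin p) ℝ) (hΛsym : Λ.IsSymm)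
    (hΛdiag : ∀ i, Λ i i = 0)
    (P : Matrix (Fin p) (Fin p) ℝ) (hPdef : P = Matrix.diagonal κ - Λ)
    (hP : P.PosDef)
    (lammin : ℝ) (hlam : 0 < lammin)
    (hray : ∀ x : Fin p → ℝ, lammin * ∑ i, (x i) ^ 2 ≤ ∑ i, ∑ j, x i * P i j * x j)
    (f : (Fin p → ℝ) → ℝ)
    (hf : ∀ θ, f θ = ∑ i, κ i * Real.cos (θ i - μ i)
        + (1 / 2) * ∑ i, ∑ j, Real.sin (θ i - μ i) * Λ i j * Real.sin (θ j - μ j)) :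
    ∀ θ : Fin p → ℝ,
      f θ ≤ ∑ i, κ i - (lammin / 2) * ∑ i, Real.sin (θ i - μ i) ^ 2 ∧
      Real.exp (f θ) ≤ Real.exp (-(p : ℝ) * lammin / 4 + ∑ i, κ i)
        * Real.exp ((lammin / 4) * ∑ i, Real.cos (2 * (θ i - μ i))) := by
  intro θ
  set s : Fin p → ℝ := fun i => Real.sin (θ i - μ i) with hs
  have hP' : ∀ i j, P i j = (if i = j then κ i else 0) - Λ i j := by
    intro i j
    simp [hPdef, Matrix.diagonal, Matrix.sub_apply]
  have hray' := hray s
  have hsplit : (∑ i, ∑ j, s i * P i j * s j)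
      = (∑ i, κ i * s i ^ 2) - ∑ i, ∑ j, s i * Λ i j * s j := by
    rw [← Finset.sum_sub_distrib]
    apply Finset.sum_congr rfl
    intro i _
    have hterm : ∀ j, s i * P i j * s j
        = (if i = j then κ i * s i ^ 2 else 0) - s i * Λ i j * s j := by
      intro j
      rw [hP' i j]
      by_cases h : i = j
      · subst h; simp [hΛdiag i]; ring_nf
      · simp [h]
    rw [Finset.sum_congr rfl fun j _ => hterm j, Finset.sum_sub_distrib]
    simp
  have hquad : (1/2 : ℝ) * ∑ i, ∑ j, s i * Λ i j * s j
      ≤ (1/2) * (∑ i, κ i * s i ^ 2) - (lammin / 2) * ∑ i, s i ^ 2 := by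
    have : lammin * ∑ i, s i ^ 2 ≤ (∑ i, κ i * s i ^ 2) - ∑ i, ∑ j, s i * Λ i j * s j := by
      rw [← hsplit]; exact hray'
    linarith
  have hfirst : f θ ≤ ∑ i, κ i - (lammin / 2) * ∑ i, s i ^ 2 := by
    rw [hf θ]
    have hcs : ∀ i, κ i * Real.cos (θ i - μ i) + (1/2) * (κ i * s i ^ 2) ≤ κ i := by
      intro i
      have h1 : Real.cos (θ i - μ i) + (1/2) * s i ^ 2 ≤ 1 := by
        have hc := Real.sin_sq_add_cos_sq (θ i - μ i)
        simp only [hs]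
        nlinarith [sq_nonneg (1 - Real.cos (θ i - μ i))]
      have := mul_le_mul_of_nonneg_left h1 (hκ i)
      nlinarith [hκ i]
    have hsum : ∑ i, κ i * Real.cos (θ i - μ i) + (1/2) * (∑ i, κ i * s i ^ 2)
        ≤ ∑ i, κ i := by
      rw [Finset.mul_sum, ← Finset.sum_add_distrib]
      exact Finset.sum_le_sum fun i _ => hcs i
    linarith [hquad]
  refine ⟨hfirst, ?_⟩
  rw [← Real.exp_add]
  apply Real.exp_le_exp.mpr
  have hcos2 : ∑ i, Real.cos (2 * (θ i - μ i)) = (p : ℝ) - 2 * ∑ i, s i ^ 2 := by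
    have : ∀ i, Real.cos (2 * (θ i - μ i)) = 1 - 2 * s i ^ 2 := by
      intro i
      have h1 := Real.cos_two_mul (θ i - μ i)
      have h2 := Real.sin_sq_add_cos_sq (θ i - μ i)
      simp only [hs]
      linarith
    rw [Finset.sum_congr rfl fun i _ => this i]
    rw [Finset.sum_sub_distrib, ← Finset.mul_sum]
    simp
  rw [hcos2]
  have := hfirst
  ring_nf
  ring_nf at this
  linarith
end
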